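/- arXiv:2403.14407 — 9 statements merged into one kernel-verified Lean document; each statement's English description precedes it below -/
import Mathlib

section
/- Let δ ∈ (0,1]. Suppose w : [0,1] → ℝ is twice continuously differentiable with w(0) = 0 and w'(0) = 0, and T : [0,1] → ℝ is continuously differentiable with T(0) = 0. Then ∫₀^δ |w(z) T(z)| dz ≤ (1/7) δ^{7/2} · (sup_{z∈[0,1]} |w''(z)|) · (∫₀¹ T'(z)² dz)^{1/2}. -/
/-!
Since `w 0 = w' 0 = 0`, integrating `|w''| ≤ M := sup_{[0,1]} |w''|` twice gives
`|w z| ≤ M z² / 2`; since `T 0 = 0`, writing `T z = ∫₀^z T'` and applying Cauchy–Schwarz gives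
`|T z| ≤ √z ‖T'‖₂`. Hence `|w T| ≤ (M ‖T'‖₂ / 2) z^{5/2}` on `[0, δ]`, and
`∫₀^δ z^{5/2} = (2/7) δ^{7/2}`.
-/

open MeasureTheory Set

theorem abs_le_mul_pow_of_abs_deriv_le {f : ℝ → ℝ} {C b : ℝ} (n : ℕ)
    (hf : Differentiable ℝ f) (hf0 : f 0 = 0)
    (hbound : ∀ x ∈ Ico 0 b, |deriv f x| ≤ C * x ^ n) :
    ∀ x ∈ Icc 0 b, |f x| ≤ C * x ^ (n + 1) / (n + 1) := by
  have hB : ∀ x, HasDerivAt (fun x => C * x ^ (n + 1) / (n + 1)) (C * x ^ n) x := fun x =>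
    (((hasDerivAt_pow (n + 1) x).const_mul C).div_const _).congr_deriv (by push_cast; field_simp)
  exact image_norm_le_of_norm_deriv_right_le_deriv_boundary hf.continuous.continuousOn
    (fun x _ => (hf x).hasDerivAt.hasDerivWithinAt) (by simp [hf0]) hB hbound

theorem abs_le_half_mul_sq_of_abs_deriv_deriv_le {f : ℝ → ℝ} {M b : ℝ}
    (hf : Differentiable ℝ f) (hf' : Differentiable ℝ (deriv f))
    (hf0 : f 0 = 0) (hf'0 : deriv f 0 = 0) (hM : ∀ x ∈ Icc 0 b, |deriv (deriv f) x| ≤ M) :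
    ∀ x ∈ Icc 0 b, |f x| ≤ M / 2 * x ^ 2 := by
  have hf'_le : ∀ x ∈ Icc 0 b, |deriv f x| ≤ M * x := by
    simpa using abs_le_mul_pow_of_abs_deriv_le 0 hf' hf'0 fun x hx => by
      simpa using hM x (Ico_subset_Icc_self hx)
  intro x hx
  have := abs_le_mul_pow_of_abs_deriv_le 1 hf hf0
    (fun y hy => by simpa using hf'_le y (Ico_subset_Icc_self hy)) x hx
  norm_num at this
  linarith

theorem integral_abs_le_sqrt_mul_integral_sq {g : ℝ → ℝ} (hg : Continuous g) {a b : ℝ}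
    (hab : a ≤ b) :
    ∫ x in a..b, |g x| ≤ (b - a) ^ ((1:ℝ)/2) * (∫ x in a..b, g x ^ 2) ^ ((1:ℝ)/2) := by
  let μ := volume.restrict (Ioc a b)
  have hL2 : ∀ f : ℝ → ℝ, Continuous f → MemLp f (ENNReal.ofReal 2) μ := fun f hf => by
    rw [ENNReal.ofReal_ofNat, memLp_two_iff_integrable_sq hf.aestronglyMeasurable]
    exact (hf.pow 2).integrableOn_Ioc
  have H := integral_mul_le_Lp_mul_Lq_of_nonneg Real.HolderConjugate.two_two
    (ae_of_all μ fun _ => zero_le_one) (ae_of_all μ fun x => abs_nonneg (g x))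
    (hL2 _ continuous_const) (hL2 _ hg.abs)
  simp only [one_mul, Real.rpow_two, sq_abs] at H
  simpa [intervalIntegral.integral_of_le hab, μ, hab] using H

theorem abs_le_sqrt_mul_integral_deriv_sq {f : ℝ → ℝ} (hf : Differentiable ℝ f)
    (hf' : Continuous (deriv f)) (hf0 : f 0 = 0) {b x : ℝ} (hx : x ∈ Icc 0 b) :
    |f x| ≤ x ^ ((1:ℝ)/2) * (∫ y in (0:ℝ)..b, deriv f y ^ 2) ^ ((1:ℝ)/2) := by
  have hftc : ∫ y in (0:ℝ)..x, deriv f y = f x := by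
    rw [intervalIntegral.integral_deriv_eq_sub (fun y _ => hf y) (hf'.intervalIntegrable _ _),
      hf0, sub_zero]
  have hmono : ∫ y in (0:ℝ)..x, deriv f y ^ 2 ≤ ∫ y in (0:ℝ)..b, deriv f y ^ 2 :=
    intervalIntegral.integral_mono_interval le_rfl hx.1 hx.2
      (ae_of_all _ fun y => sq_nonneg _) ((hf'.pow 2).intervalIntegrable _ _)
  calc |f x| = |∫ y in (0:ℝ)..x, deriv f y| := by rw [hftc]
    _ ≤ ∫ y in (0:ℝ)..x, |deriv f y| := intervalIntegral.abs_integral_le_integral_abs hx.1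
    _ ≤ x ^ ((1:ℝ)/2) * (∫ y in (0:ℝ)..x, deriv f y ^ 2) ^ ((1:ℝ)/2) := by
        simpa using integral_abs_le_sqrt_mul_integral_sq hf' hx.1
    _ ≤ _ := by
        gcongr
        · exact Real.rpow_nonneg hx.1 _
        · exact intervalIntegral.integral_nonneg hx.1 fun y _ => sq_nonneg _

theorem abs_le_iSup_Icc {f : ℝ → ℝ} (hf : Continuous f) {a b t : ℝ} (ht : t ∈ Icc a b) :
    |f t| ≤ ⨆ z : Icc a b, |f z| :=
  le_ciSup (isCompact_range (by fun_prop : Continuous fun z : Icc a b => |f z|)).bddAbove ⟨t, ht⟩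

theorem integral_abs_mul_le_of_abs_le {f g : ℝ → ℝ} (hf : Continuous f) (hg : Continuous g)
    {A B δ : ℝ} (hδ : 0 ≤ δ) (hfA : ∀ z ∈ Icc 0 δ, |f z| ≤ A * z ^ 2)
    (hgB : ∀ z ∈ Icc 0 δ, |g z| ≤ B * z ^ ((1:ℝ)/2)) :
    ∫ z in (0:ℝ)..δ, |f z * g z| ≤ 2 / 7 * A * B * δ ^ ((7:ℝ)/2) := by
  have hpow : ∀ z ∈ Icc (0:ℝ) δ, z ^ 2 * z ^ ((1:ℝ)/2) = z ^ ((5:ℝ)/2) := fun z hz => by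
    rw [← Real.rpow_natCast, ← Real.rpow_add' hz.1 (by norm_num)]
    norm_num
  have hpointwise : ∀ z ∈ Icc 0 δ, |f z * g z| ≤ A * B * z ^ ((5:ℝ)/2) := fun z hz => by
    rw [abs_mul, ← hpow z hz, mul_mul_mul_comm]
    exact mul_le_mul (hfA z hz) (hgB z hz) (abs_nonneg _) ((abs_nonneg _).trans (hfA z hz))
  calc ∫ z in (0:ℝ)..δ, |f z * g z| ≤ ∫ z in (0:ℝ)..δ, A * B * z ^ ((5:ℝ)/2) :=
        intervalIntegral.integral_mono_on hδ ((hf.mul hg).abs.intervalIntegrable _ _)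
          ((continuous_const.mul (Real.continuous_rpow_const (by norm_num))).intervalIntegrable
            _ _) hpointwise
    _ = 2 / 7 * A * B * δ ^ ((7:ℝ)/2) := by
        rw [intervalIntegral.integral_const_mul, integral_rpow (Or.inl (by norm_num)),
          Real.zero_rpow (by norm_num)]
        norm_num
        ring

/-- Lower boundary-layer estimate in the no-slip proof: for `δ ∈ (0,1]`, if `w` is C²
with `w 0 = 0` and `w' 0 = 0`, and `T` is C¹ with `T 0 = 0`, then
`∫₀^δ |w T| ≤ (1/7) δ^{7/2} (sup_{[0,1]} |w''|) ‖T'‖₂`. -/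
theorem lower_boundary_layer_estimate_no_slip
    (δ : ℝ) (hδ : δ ∈ Set.Ioc (0:ℝ) 1)
    (w T : ℝ → ℝ) (hw : ContDiff ℝ 2 w) (hT : ContDiff ℝ 1 T)
    (hw0 : w 0 = 0) (hw'0 : deriv w 0 = 0) (hT0 : T 0 = 0) :
    (∫ z in (0:ℝ)..δ, |w z * T z|) ≤
      (1/7) * δ ^ ((7:ℝ)/2) * (⨆ z : Set.Icc (0:ℝ) 1, |iteratedDeriv 2 w z.1|) *
        (∫ z in (0:ℝ)..1, (deriv T z)^2) ^ ((1:ℝ)/2) := by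
  set M := ⨆ z : Set.Icc (0:ℝ) 1, |iteratedDeriv 2 w z.1|
  set N := (∫ z in (0:ℝ)..1, (deriv T z)^2) ^ ((1:ℝ)/2)
  have hw' : ContDiff ℝ 1 (deriv w) := hw.iterate_deriv' 1 1
  have hw'' : deriv (deriv w) = iteratedDeriv 2 w := (iteratedDeriv_eq_iterate (n := 2)).symm
  have hIcc : Icc 0 δ ⊆ Icc 0 1 := Icc_subset_Icc_right hδ.2
  have hwM : ∀ z ∈ Icc 0 δ, |w z| ≤ M / 2 * z ^ 2 :=
    abs_le_half_mul_sq_of_abs_deriv_deriv_le (hw.differentiable (by norm_num))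
      (hw'.differentiable one_ne_zero) hw0 hw'0 fun x hx => by
        simpa only [hw''] using abs_le_iSup_Icc (hw.continuous_iteratedDeriv 2 le_rfl) (hIcc hx)
  have hTN : ∀ z ∈ Icc 0 δ, |T z| ≤ N * z ^ ((1:ℝ)/2) := fun z hz => by
    rw [mul_comm]
    exact abs_le_sqrt_mul_integral_deriv_sq (hT.differentiable one_ne_zero)
      (hT.continuous_deriv le_rfl) hT0 (hIcc hz)
  calc _ ≤ 2 / 7 * (M / 2) * N * δ ^ ((7:ℝ)/2) :=
        integral_abs_mul_le_of_abs_le hw.continuous hT.continuous hδ.1.le hwM hTN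
    _ = _ := by ring
end

section
/- Let ε ∈ (0,1/3]. Suppose w : [0,1] → ℝ is twice continuously differentiable with w(1) = 0 and w'(1) = 0, and T : [0,1] → ℝ is continuously differentiable with T(1) = 0. Then ∫_{1−ε}^{1} z^{−2} |w(z) T(z)| dz ≤ (5/14) ε^{7/2} · (sup_{z∈[0,1]} |w''(z)|) · (∫₀¹ T'(z)² dz)^{1/2}. -/
open MeasureTheory

/-!
Integrating twice from the boundary, where `w` and `w'` vanish, gives `|w z| ≤ M (1 - z)² / 2`
with `M = sup |w''|`; integrating once and applying Cauchy–Schwarz gives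
`|T z| ≤ √(1 - z) ‖T'‖₂`. On `[1 - ε, 1] ⊆ [2/3, 1]` moreover `z⁻² ≤ 9/4 ≤ 5/2`, so the integrand
is at most `(5/4) M ‖T'‖₂ (1 - z)^(5/2)`, whose integral over `[1 - ε, 1]` is
`(5/14) M ‖T'‖₂ ε^(7/2)`.
-/

open Set Real

theorem IsCompact.le_ciSup_of_continuousOn {α : Type*} [TopologicalSpace α] {s : Set α}
    (hs : IsCompact s) {f : α → ℝ} (hf : ContinuousOn f s) {x : α} (hx : x ∈ s) :
    f x ≤ ⨆ y : s, f y :=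
  le_ciSup (by rw [← image_eq_range]; exact hs.bddAbove_image hf) (⟨x, hx⟩ : s)

theorem sq_integral_abs_le_mul_integral_sq {f : ℝ → ℝ} (hf : Continuous f) {a b : ℝ}
    (hab : a ≤ b) : (∫ t in a..b, |f t|) ^ 2 ≤ (b - a) * ∫ t in a..b, f t ^ 2 := by
  set I := ∫ t in a..b, |f t|
  set Q := ∫ t in a..b, f t ^ 2
  -- `c ↦ ∫ (|f| - c)²` is a nonnegative quadratic, so its discriminant is nonpositive.
  have hquad (c : ℝ) : 0 ≤ (b - a) * (c * c) + (-2 * I) * c + Q := by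
    have hint {g : ℝ → ℝ} (hg : Continuous g) : IntervalIntegrable g volume a b :=
      hg.intervalIntegrable a b
    have hexpand : ∫ t in a..b, (|f t| - c) ^ 2 = (b - a) * (c * c) + (-2 * I) * c + Q := by
      simp_rw [sub_sq, sq_abs]
      rw [intervalIntegral.integral_add (hint (by fun_prop)) (hint (by fun_prop)),
        intervalIntegral.integral_sub (hint (by fun_prop)) (hint (by fun_prop)),
        intervalIntegral.integral_const, intervalIntegral.integral_mul_const,
        intervalIntegral.integral_const_mul, smul_eq_mul]
      ring
    exact hexpand ▸ intervalIntegral.integral_nonneg hab fun t _ => sq_nonneg _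
  have hdiscrim := discrim_le_zero hquad
  rw [discrim] at hdiscrim
  nlinarith

theorem integral_sub_rpow {r : ℝ} (hr : -1 < r) (a b : ℝ) :
    ∫ z in a..b, (b - z) ^ r = (b - a) ^ (r + 1) / (r + 1) := by
  rw [intervalIntegral.integral_comp_sub_left (fun x => x ^ r) b, sub_self,
    integral_rpow (Or.inl hr), zero_rpow (by linarith), sub_zero]

section VanishingAtRightEndpoint

variable {f : ℝ → ℝ} {a b z : ℝ}

theorem abs_le_integral_abs_deriv_of_eq_zero (hf : ContDiff ℝ 1 f) (hb : f b = 0)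
    (hzb : z ≤ b) : |f z| ≤ ∫ t in z..b, |deriv f t| := by
  rw [← abs_neg, ← zero_sub, ← hb, ← intervalIntegral.integral_deriv_eq_sub
    (fun x _ => hf.differentiable one_ne_zero x)
    ((hf.continuous_deriv le_rfl).intervalIntegrable _ _)]
  exact intervalIntegral.abs_integral_le_integral_abs hzb

theorem abs_le_mul_sub_of_abs_deriv_le (hf : ContDiff ℝ 1 f) (hb : f b = 0) {M : ℝ}
    (hM : ∀ t ∈ Icc a b, |deriv f t| ≤ M) (hz : z ∈ Icc a b) : |f z| ≤ M * (b - z) :=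
  calc |f z| ≤ ∫ t in z..b, |deriv f t| := abs_le_integral_abs_deriv_of_eq_zero hf hb hz.2
    _ ≤ ∫ _ in z..b, M :=
        intervalIntegral.integral_mono_on hz.2
          ((hf.continuous_deriv le_rfl).abs.intervalIntegrable _ _) intervalIntegrable_const
          fun t ht => hM t ⟨hz.1.trans ht.1, ht.2⟩
    _ = M * (b - z) := by rw [intervalIntegral.integral_const, smul_eq_mul, mul_comm]

theorem abs_le_of_abs_iteratedDeriv_two_le (hf : ContDiff ℝ 2 f) (hb : f b = 0)
    (hb' : deriv f b = 0) {M : ℝ} (hM : ∀ t ∈ Icc a b, |iteratedDeriv 2 f t| ≤ M)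
    (hz : z ∈ Icc a b) : |f z| ≤ M * (b - z) ^ 2 / 2 := by
  obtain ⟨-, -, hf'⟩ := contDiff_succ_iff_deriv.mp (show ContDiff ℝ (1 + 1) f from hf)
  have hf1 : ContDiff ℝ 1 f := hf.of_le one_le_two
  rw [iteratedDeriv_succ, iteratedDeriv_one] at hM
  have hderiv (t : ℝ) (ht : t ∈ Icc z b) : |deriv f t| ≤ M * (b - t) :=
    abs_le_mul_sub_of_abs_deriv_le hf' hb' hM ⟨hz.1.trans ht.1, ht.2⟩
  calc |f z| ≤ ∫ t in z..b, |deriv f t| := abs_le_integral_abs_deriv_of_eq_zero hf1 hb hz.2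
    _ ≤ ∫ t in z..b, M * (b - t) :=
        intervalIntegral.integral_mono_on hz.2
          ((hf1.continuous_deriv le_rfl).abs.intervalIntegrable _ _)
          ((by fun_prop : Continuous fun t => M * (b - t)).intervalIntegrable _ _) hderiv
    _ = M * (b - z) ^ 2 / 2 := by
        rw [intervalIntegral.integral_const_mul,
          intervalIntegral.integral_comp_sub_left (fun x => x) b, sub_self, integral_id]
        ring

theorem abs_le_sqrt_mul_sqrt_integral_deriv_sq (hf : ContDiff ℝ 1 f) (hb : f b = 0)
    (hz : z ∈ Icc a b) : |f z| ≤ √(b - z) * √(∫ t in a..b, deriv f t ^ 2) := by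
  have hf' : Continuous (deriv f) := hf.continuous_deriv le_rfl
  calc |f z| ≤ ∫ t in z..b, |deriv f t| := abs_le_integral_abs_deriv_of_eq_zero hf hb hz.2
    _ ≤ √((b - z) * ∫ t in z..b, deriv f t ^ 2) :=
        (le_abs_self _).trans (abs_le_sqrt (sq_integral_abs_le_mul_integral_sq hf' hz.2))
    _ = √(b - z) * √(∫ t in z..b, deriv f t ^ 2) := sqrt_mul (sub_nonneg.mpr hz.2) _
    _ ≤ √(b - z) * √(∫ t in a..b, deriv f t ^ 2) := by
        gcongr
        exact intervalIntegral.integral_mono_interval hz.1 hz.2 le_rfl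
          (ae_of_all _ fun t => sq_nonneg _) ((hf'.pow 2).intervalIntegrable _ _)

theorem abs_mul_le_of_eq_zero_of_abs_iteratedDeriv_two_le {g : ℝ → ℝ} (hf : ContDiff ℝ 2 f)
    (hg : ContDiff ℝ 1 g) (hfb : f b = 0) (hfb' : deriv f b = 0) (hgb : g b = 0) {M : ℝ}
    (hM : ∀ t ∈ Icc a b, |iteratedDeriv 2 f t| ≤ M) (hz : z ∈ Icc a b) :
    |f z * g z| ≤ M / 2 * √(∫ t in a..b, deriv g t ^ 2) * (b - z) ^ ((5 : ℝ) / 2) := by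
  have hfz := abs_le_of_abs_iteratedDeriv_two_le hf hfb hfb' hM hz
  have hpow : (b - z) ^ ((5 : ℝ) / 2) = (b - z) ^ 2 * √(b - z) := by
    rw [sqrt_eq_rpow, ← rpow_natCast, ← rpow_add' (sub_nonneg.mpr hz.2) (by norm_num)]
    norm_num
  calc |f z * g z| = |f z| * |g z| := abs_mul _ _
    _ ≤ M * (b - z) ^ 2 / 2 * (√(b - z) * √(∫ t in a..b, deriv g t ^ 2)) :=
        mul_le_mul hfz (abs_le_sqrt_mul_sqrt_integral_deriv_sq hg hgb hz) (abs_nonneg _)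
          ((abs_nonneg _).trans hfz)
    _ = M / 2 * √(∫ t in a..b, deriv g t ^ 2) * (b - z) ^ ((5 : ℝ) / 2) := by
        rw [hpow]; ring

end VanishingAtRightEndpoint

/-- Upper boundary-layer estimate in the no-slip proof: for `ε ∈ (0,1/3]`, if `w` is C²
with `w 1 = 0` and `w' 1 = 0`, and `T` is C¹ with `T 1 = 0`, then
`∫_{1-ε}^1 z⁻² |w T| ≤ (5/14) ε^{7/2} (sup_{[0,1]} |w''|) ‖T'‖₂`. -/
theorem upper_boundary_layer_estimate_no_slip
    (ε : ℝ) (hε : ε ∈ Set.Ioc (0:ℝ) (1/3))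
    (w T : ℝ → ℝ) (hw : ContDiff ℝ 2 w) (hT : ContDiff ℝ 1 T)
    (hw1 : w 1 = 0) (hw'1 : deriv w 1 = 0) (hT1 : T 1 = 0) :
    (∫ z in (1-ε)..1, z⁻¹^2 * |w z * T z|) ≤
      (5/14) * ε ^ ((7:ℝ)/2) * (⨆ z : Set.Icc (0:ℝ) 1, |iteratedDeriv 2 w z.1|) *
        (∫ z in (0:ℝ)..1, (deriv T z)^2) ^ ((1:ℝ)/2) := by
  obtain ⟨hε0, hε3⟩ := hε
  set M := ⨆ z : Set.Icc (0:ℝ) 1, |iteratedDeriv 2 w z.1|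
  set N := √(∫ z in (0:ℝ)..1, (deriv T z) ^ 2)
  rw [← sqrt_eq_rpow]
  have hM (t : ℝ) (ht : t ∈ Icc (0:ℝ) 1) : |iteratedDeriv 2 w t| ≤ M :=
    isCompact_Icc.le_ciSup_of_continuousOn (f := fun t => |iteratedDeriv 2 w t|)
      (hw.continuous_iteratedDeriv 2 le_rfl).abs.continuousOn ht
  have hpointwise (z : ℝ) (hz : z ∈ Icc (1 - ε) 1) :
      z⁻¹ ^ 2 * |w z * T z| ≤ 5 / 2 * (M / 2 * N * (1 - z) ^ ((5:ℝ)/2)) := by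
    have hz0 : 0 < z := by linarith [hz.1]
    have hinv : z⁻¹ ^ 2 ≤ 5 / 2 := by
      have : z⁻¹ ≤ 3 / 2 := by rw [inv_le_comm₀ hz0 (by norm_num)]; linarith [hz.1]
      nlinarith [inv_nonneg.mpr hz0.le]
    exact mul_le_mul hinv (abs_mul_le_of_eq_zero_of_abs_iteratedDeriv_two_le hw hT hw1 hw'1 hT1
      hM ⟨hz0.le, hz.2⟩) (abs_nonneg _) (by norm_num)
  have hintegrable : IntervalIntegrable (fun z => z⁻¹ ^ 2 * |w z * T z|) volume (1 - ε) 1 := by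
    refine ContinuousOn.intervalIntegrable_of_Icc (by linarith) ?_
    have hne : ∀ z ∈ Icc (1 - ε) 1, z ≠ 0 := fun z hz => by linarith [hz.1]
    exact ((continuousOn_id.inv₀ hne).pow 2).mul
      (hw.continuous.mul hT.continuous).abs.continuousOn
  calc ∫ z in (1-ε)..1, z⁻¹ ^ 2 * |w z * T z|
      ≤ ∫ z in (1-ε)..1, 5 / 2 * (M / 2 * N * (1 - z) ^ ((5:ℝ)/2)) :=
        intervalIntegral.integral_mono_on (by linarith) hintegrable
          (Continuous.intervalIntegrable (by fun_prop (disch := norm_num)) _ _) hpointwise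
    _ = 5 / 14 * ε ^ ((7:ℝ)/2) * M * N := by
        rw [intervalIntegral.integral_const_mul, intervalIntegral.integral_const_mul,
          integral_sub_rpow (by norm_num), sub_sub_cancel,
          show (5 : ℝ) / 2 + 1 = 7 / 2 by norm_num]
        ring
end

section
/- Let k > 0 and R > 0. Suppose w : [0,1] → ℝ is four times continuously differentiable, T : [0,1] → ℝ is continuous, and they satisfy w''''(z) − 2k² w''(z) + k⁴ w(z) = R k² T(z) for all z ∈ [0,1], together with the stress-free boundary conditions w(0) = w(1) = 0 and w''(0) = w''(1) = 0. Then ∫₀¹ (w''(z) − k² w(z))² dz ≤ R² ∫₀¹ T(z)² dz. -/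
open MeasureTheory intervalIntegral Set

/-!
With `ζ = w'' - k²w`, the equation says `ζ'' = k² (ζ + R T)` and the boundary conditions say
`ζ(0) = ζ(1) = 0`. Integrating by parts, `k² ∫ ζ (ζ + R T) = ∫ ζ ζ'' = -∫ ζ'² ≤ 0`, and then the
pointwise identity `ζ² + (ζ + R T)² = 2 ζ (ζ + R T) + R² T²` gives `∫ ζ² ≤ R² ∫ T²`.
-/

theorem ContDiff.hasDerivAt_iteratedDeriv {𝕜 F : Type*} [NontriviallyNormedField 𝕜]
    [NormedAddCommGroup F] [NormedSpace 𝕜 F] {f : 𝕜 → F} {n : WithTop ℕ∞} {m : ℕ}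
    (hf : ContDiff 𝕜 n f) (hmn : m < n) (x : 𝕜) :
    HasDerivAt (iteratedDeriv m f) (iteratedDeriv (m + 1) f x) x := by
  rw [iteratedDeriv_succ]
  exact (hf.differentiable_iteratedDeriv m hmn x).hasDerivAt

theorem integral_mul_second_deriv_nonpos {f f' f'' : ℝ → ℝ} {a b : ℝ}
    (hf : ∀ x ∈ uIcc a b, HasDerivAt f (f' x) x) (hf' : ∀ x ∈ uIcc a b, HasDerivAt f' (f'' x) x)
    (hf'' : IntervalIntegrable f'' volume a b) (hfa : f a = 0) (hfb : f b = 0) (hab : a ≤ b) :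
    ∫ x in a..b, f x * f'' x ≤ 0 := by
  have hf'_int : IntervalIntegrable f' volume a b :=
    ContinuousOn.intervalIntegrable fun x hx => (hf' x hx).continuousAt.continuousWithinAt
  rw [integral_mul_deriv_eq_deriv_mul hf hf' hf'_int hf'', hfa, hfb, zero_mul, zero_mul,
    sub_zero, zero_sub, neg_nonpos]
  exact integral_nonneg hab fun x _ => mul_self_nonneg (f' x)

theorem integral_sq_le_sq_mul_integral_sq_of_integral_mul_add_nonpos {f g : ℝ → ℝ} {a b c : ℝ}
    (hf : ContinuousOn f (uIcc a b)) (hg : ContinuousOn g (uIcc a b)) (hab : a ≤ b)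
    (h : ∫ x in a..b, f x * (f x + c * g x) ≤ 0) :
    ∫ x in a..b, f x ^ 2 ≤ c ^ 2 * ∫ x in a..b, g x ^ 2 := by
  have hfg : IntervalIntegrable (fun x => f x * (f x + c * g x)) volume a b :=
    (hf.mul (hf.add (hg.const_smul c))).intervalIntegrable
  have hg2 : IntervalIntegrable (fun x => g x ^ 2) volume a b := (hg.pow 2).intervalIntegrable
  have hpointwise : ∀ x ∈ Icc a b,
      f x ^ 2 ≤ 2 * (f x * (f x + c * g x)) + c ^ 2 * g x ^ 2 :=
    fun x _ => by nlinarith [sq_nonneg (f x + c * g x)]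
  calc ∫ x in a..b, f x ^ 2
      ≤ ∫ x in a..b, (2 * (f x * (f x + c * g x)) + c ^ 2 * g x ^ 2) :=
        integral_mono_on hab (hf.pow 2).intervalIntegrable
          ((hfg.const_mul 2).add (hg2.const_mul _)) hpointwise
    _ = 2 * (∫ x in a..b, f x * (f x + c * g x)) + c ^ 2 * ∫ x in a..b, g x ^ 2 := by
        rw [integral_add (hfg.const_mul 2) (hg2.const_mul _), intervalIntegral.integral_const_mul,
          intervalIntegral.integral_const_mul]
    _ ≤ c ^ 2 * ∫ x in a..b, g x ^ 2 := by linarith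

theorem pseudo_vorticity_L2_estimate_stress_free_general
    (k R : ℝ) (hk : 0 < k)
    (w T : ℝ → ℝ) (hw : ContDiff ℝ 4 w) (hT : Continuous T)
    (hode : ∀ z ∈ Set.Icc (0:ℝ) 1,
      iteratedDeriv 4 w z - 2 * k^2 * iteratedDeriv 2 w z + k^4 * w z = R * k^2 * T z)
    (hw0 : w 0 = 0) (hw1 : w 1 = 0)
    (hw''0 : iteratedDeriv 2 w 0 = 0) (hw''1 : iteratedDeriv 2 w 1 = 0) :
    (∫ z in (0:ℝ)..1, (iteratedDeriv 2 w z - k^2 * w z)^2) ≤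
      R^2 * ∫ z in (0:ℝ)..1, (T z)^2 := by
  have hderiv : ∀ m : ℕ, m < 4 → ∀ x,
      HasDerivAt (iteratedDeriv m w) (iteratedDeriv (m + 1) w x) x :=
    fun m hm => hw.hasDerivAt_iteratedDeriv (by exact_mod_cast hm)
  have hζ : ∀ x, HasDerivAt (fun z => iteratedDeriv 2 w z - k ^ 2 * w z)
      (iteratedDeriv 3 w x - k ^ 2 * iteratedDeriv 1 w x) x := fun x => by
    have h := (hderiv 2 (by norm_num) x).sub ((hderiv 0 (by norm_num) x).const_mul (k ^ 2))
    rw [iteratedDeriv_zero] at h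
    exact h
  have hζ' : ∀ x, HasDerivAt (fun z => iteratedDeriv 3 w z - k ^ 2 * iteratedDeriv 1 w z)
      (iteratedDeriv 4 w x - k ^ 2 * iteratedDeriv 2 w x) x := fun x =>
    (hderiv 3 (by norm_num) x).sub ((hderiv 1 (by norm_num) x).const_mul (k ^ 2))
  have hζ_mul_ζ'' : ∀ x ∈ uIcc (0:ℝ) 1,
      (iteratedDeriv 2 w x - k ^ 2 * w x) * (iteratedDeriv 4 w x - k ^ 2 * iteratedDeriv 2 w x) =
        k ^ 2 * ((iteratedDeriv 2 w x - k ^ 2 * w x) *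
          (iteratedDeriv 2 w x - k ^ 2 * w x + R * T x)) := fun x hx => by
    rw [uIcc_of_le zero_le_one] at hx
    linear_combination (iteratedDeriv 2 w x - k ^ 2 * w x) * hode x hx
  have henergy := integral_mul_second_deriv_nonpos (fun x _ => hζ x) (fun x _ => hζ' x)
    (((hw.continuous_iteratedDeriv 4 le_rfl).sub
      ((hw.continuous_iteratedDeriv 2 (by norm_num)).const_smul (k ^ 2))).intervalIntegrable 0 1)
    (by simp [hw0, hw''0]) (by simp [hw1, hw''1]) zero_le_one
  rw [integral_congr hζ_mul_ζ'', intervalIntegral.integral_const_mul] at henergy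
  exact integral_sq_le_sq_mul_integral_sq_of_integral_mul_add_nonpos
    (((hw.continuous_iteratedDeriv 2 (by norm_num)).sub
      (hw.continuous.const_smul (k ^ 2))).continuousOn) hT.continuousOn zero_le_one
    (nonpos_of_mul_nonpos_right henergy (by positivity))

/-- First pseudo-vorticity estimate (Lemma 2 of the paper, after Whitehead–Doering 2012):
if `w'''' - 2k²w'' + k⁴w = Rk²T` on `[0,1]` with stress-free boundary conditions
`w(0) = w(1) = w''(0) = w''(1) = 0`, then `∫₀¹ (w'' - k²w)² ≤ R² ∫₀¹ T²`. -/
theorem pseudo_vorticity_L2_estimate_stress_free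
    (k R : ℝ) (hk : 0 < k) (hR : 0 < R)
    (w T : ℝ → ℝ) (hw : ContDiff ℝ 4 w) (hT : Continuous T)
    (hode : ∀ z ∈ Set.Icc (0:ℝ) 1,
      iteratedDeriv 4 w z - 2 * k^2 * iteratedDeriv 2 w z + k^4 * w z = R * k^2 * T z)
    (hw0 : w 0 = 0) (hw1 : w 1 = 0)
    (hw''0 : iteratedDeriv 2 w 0 = 0) (hw''1 : iteratedDeriv 2 w 1 = 0) :
    (∫ z in (0:ℝ)..1, (iteratedDeriv 2 w z - k^2 * w z)^2) ≤
      R^2 * ∫ z in (0:ℝ)..1, (T z)^2 :=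
  pseudo_vorticity_L2_estimate_stress_free_general k R hk w T hw hT hode hw0 hw1 hw''0 hw''1
end

section
/- Let k > 0 and R > 0. Suppose w : [0,1] → ℝ is four times continuously differentiable, T : [0,1] → ℝ is continuous, and they satisfy w''''(z) − 2k² w''(z) + k⁴ w(z) = R k² T(z) for all z ∈ [0,1], together with the stress-free boundary conditions w(0) = w(1) = 0 and w''(0) = w''(1) = 0. Then ∫₀¹ w(z) T(z) dz = (1/(R k²)) ∫₀¹ (w''(z) − k² w(z))² dz. -/
/-!
Multiplied by `w`, the left side of the equation differs from `(w'' - k²w)²` by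
`w w'''' - w'' w''`, the integrand of Green's second identity for the pair `w, w''`.
Its boundary terms `w (w'')' - w' w''` vanish because `w` and `w''` vanish at both ends.
-/

open MeasureTheory

theorem intervalIntegral.integral_mul_iteratedDeriv_two_sub {u v : ℝ → ℝ}
    (hu : ContDiff ℝ 2 u) (hv : ContDiff ℝ 2 v) (a b : ℝ) :
    ∫ x in a..b, (u x * iteratedDeriv 2 v x - iteratedDeriv 2 u x * v x) =
      (u b * deriv v b - deriv u b * v b) - (u a * deriv v a - deriv u a * v a) := by
  have hderiv {f : ℝ → ℝ} (hf : ContDiff ℝ 2 f) (x : ℝ) :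
      HasDerivAt f (deriv f x) x ∧ HasDerivAt (deriv f) (iteratedDeriv 2 f x) x := by
    rw [iteratedDeriv_succ, iteratedDeriv_one]
    exact ⟨(hf.differentiable two_ne_zero x).hasDerivAt,
      ((hf.deriv' (n := 1)).differentiable one_ne_zero x).hasDerivAt⟩
  have hcont : Continuous fun x => u x * iteratedDeriv 2 v x - iteratedDeriv 2 u x * v x :=
    (hu.continuous.mul (hv.continuous_iteratedDeriv 2 le_rfl)).sub
      ((hu.continuous_iteratedDeriv 2 le_rfl).mul hv.continuous)
  refine intervalIntegral.integral_eq_sub_of_hasDerivAt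
    (f := fun x => u x * deriv v x - deriv u x * v x) (fun x _ => ?_)
    (hcont.intervalIntegrable a b)
  obtain ⟨hu₁, hu₂⟩ := hderiv hu x
  obtain ⟨hv₁, hv₂⟩ := hderiv hv x
  exact ((hu₁.mul hv₂).sub (hu₂.mul hv₁)).congr_deriv (by ring)

theorem iteratedDeriv_iteratedDeriv {𝕜 F : Type*} [NontriviallyNormedField 𝕜]
    [NormedAddCommGroup F] [NormedSpace 𝕜 F] (m n : ℕ) (f : 𝕜 → F) :
    iteratedDeriv m (iteratedDeriv n f) = iteratedDeriv (m + n) f := by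
  simp only [iteratedDeriv_eq_iterate, ← Function.iterate_add_apply]

theorem wT_pseudo_vorticity_identity_stress_free_general
    (k R : ℝ) (hk : 0 < k) (hR : 0 < R)
    (w T : ℝ → ℝ) (hw : ContDiff ℝ 4 w)
    (hode : ∀ z ∈ Set.Icc (0:ℝ) 1,
      iteratedDeriv 4 w z - 2 * k^2 * iteratedDeriv 2 w z + k^4 * w z = R * k^2 * T z)
    (hw0 : w 0 = 0) (hw1 : w 1 = 0)
    (hw''0 : iteratedDeriv 2 w 0 = 0) (hw''1 : iteratedDeriv 2 w 1 = 0) :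
    (∫ z in (0:ℝ)..1, w z * T z) =
      (1 / (R * k^2)) * ∫ z in (0:ℝ)..1, (iteratedDeriv 2 w z - k^2 * w z)^2 := by
  have hw₂ : ContDiff ℝ 2 w := hw.of_le (by norm_num)
  have hw''₂ : ContDiff ℝ 2 (iteratedDeriv 2 w) := by
    rw [iteratedDeriv_eq_iterate]; exact hw.iterate_deriv' 2 2
  have hw'' := hw.continuous_iteratedDeriv 2 (by norm_num)
  have hw'''' := hw.continuous_iteratedDeriv 4 le_rfl
  have h_ode : R * k^2 * ∫ z in (0:ℝ)..1, w z * T z = ∫ z in (0:ℝ)..1,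
      w z * (iteratedDeriv 4 w z - 2 * k^2 * iteratedDeriv 2 w z + k^4 * w z) := by
    rw [← intervalIntegral.integral_const_mul]
    refine intervalIntegral.integral_congr fun z hz => ?_
    rw [Set.uIcc_of_le zero_le_one] at hz
    simp only [hode z hz]
    ring
  have h_green : ∫ z in (0:ℝ)..1,
      (w z * iteratedDeriv 4 w z - iteratedDeriv 2 w z * iteratedDeriv 2 w z) = 0 := by
    have h := intervalIntegral.integral_mul_iteratedDeriv_two_sub hw₂ hw''₂ 0 1
    rw [iteratedDeriv_iteratedDeriv] at h
    simpa [hw0, hw1, hw''0, hw''1] using h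
  have h_diff :
      (∫ z in (0:ℝ)..1,
        w z * (iteratedDeriv 4 w z - 2 * k^2 * iteratedDeriv 2 w z + k^4 * w z)) -
      ∫ z in (0:ℝ)..1, (iteratedDeriv 2 w z - k^2 * w z)^2 =
      ∫ z in (0:ℝ)..1,
        (w z * iteratedDeriv 4 w z - iteratedDeriv 2 w z * iteratedDeriv 2 w z) := by
    rw [← intervalIntegral.integral_sub]
    · exact intervalIntegral.integral_congr fun z _ => by ring
    · exact (hw₂.continuous.mul ((hw''''.sub (continuous_const.mul hw'')).add
        (continuous_const.mul hw₂.continuous))).intervalIntegrable 0 1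
    · exact ((hw''.sub (continuous_const.mul hw₂.continuous)).pow 2).intervalIntegrable 0 1
  field_simp
  linarith

/-- Second pseudo-vorticity estimate (Lemma 2 of the paper, after Whitehead–Doering 2012):
if `w'''' - 2k²w'' + k⁴w = Rk²T` on `[0,1]` with stress-free boundary conditions
`w(0) = w(1) = w''(0) = w''(1) = 0`, then `∫₀¹ wT = (1/(Rk²)) ∫₀¹ (w'' - k²w)²`. -/
theorem wT_pseudo_vorticity_identity_stress_free
    (k R : ℝ) (hk : 0 < k) (hR : 0 < R)
    (w T : ℝ → ℝ) (hw : ContDiff ℝ 4 w) (hT : Continuous T)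
    (hode : ∀ z ∈ Set.Icc (0:ℝ) 1,
      iteratedDeriv 4 w z - 2 * k^2 * iteratedDeriv 2 w z + k^4 * w z = R * k^2 * T z)
    (hw0 : w 0 = 0) (hw1 : w 1 = 0)
    (hw''0 : iteratedDeriv 2 w 0 = 0) (hw''1 : iteratedDeriv 2 w 1 = 0) :
    (∫ z in (0:ℝ)..1, w z * T z) =
      (1 / (R * k^2)) * ∫ z in (0:ℝ)..1, (iteratedDeriv 2 w z - k^2 * w z)^2 :=
  wT_pseudo_vorticity_identity_stress_free_general k R hk hR w T hw hode hw0 hw1 hw''0 hw''1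
end

section
/- Let k > 0. Suppose w : [0,1] → ℝ is twice continuously differentiable and ζ : [0,1] → ℝ is continuous, with w(0) = w(1) = 0, ζ(0) = ζ(1) = 0, and w''(z) − k² w(z) = k ζ(z) for all z ∈ [0,1]. Then for every z ∈ [0,1], |w(z)| ≤ c₁ k^{1/2} min(z, 1−z) (∫₀¹ ζ(s)² ds)^{1/2}, where c₁ := 3^{3/4}/2^{3/2}. -/
/-!
Integrating the equation against the solutions `sinh (k s)` and `sinh (k (s - 1))` of the
homogeneous equation (Lagrange's identity) gives the Green's function representation
`sinh k * w z = sinh (k z) ∫_z^1 sinh (k (s - 1)) ζ - sinh (k (1 - z)) ∫_0^z sinh (k s) ζ`.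
Cauchy–Schwarz bounds `|w z|` by `‖ζ‖₂` times the `L²` norm of the Green's function, and the
elementary inequality `e^t - 1 - t ≤ t² e^t / 2` bounds that norm by `√(k / 2) min z (1 - z)`,
which is below `c₁ √k min z (1 - z)` because `2 ≤ 3^{3/4}`.
-/

open MeasureTheory Real intervalIntegral Set

noncomputable def sinhSqAntideriv (x : ℝ) : ℝ := (sinh x * cosh x - x) / 2

lemma hasDerivAt_sinhSqAntideriv (x : ℝ) : HasDerivAt sinhSqAntideriv (sinh x ^ 2) x := by
  have := (((hasDerivAt_sinh x).mul (hasDerivAt_cosh x)).sub (hasDerivAt_id x)).div_const 2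
  refine this.congr_deriv ?_
  linear_combination cosh_sq x / 2

lemma sinhSqAntideriv_neg (x : ℝ) : sinhSqAntideriv (-x) = -sinhSqAntideriv x := by
  simp only [sinhSqAntideriv, sinh_neg, cosh_neg]
  ring

lemma sinh_mul_exp_neg (x : ℝ) : sinh x * exp (-x) = (1 - exp (-(2 * x))) / 2 := by
  rw [sinh_eq, show -(2 * x) = -x + -x by ring, exp_add]
  have h : exp x * exp (-x) = 1 := by rw [← exp_add, add_neg_cancel, exp_zero]
  linear_combination h / 2

lemma sinhSqAntideriv_le (x : ℝ) : sinhSqAntideriv x ≤ sinh x ^ 2 / 2 := by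
  have h : sinh x * (cosh x - sinh x) ≤ x := by
    rw [cosh_sub_sinh, sinh_mul_exp_neg]
    linarith [add_one_le_exp (-(2 * x))]
  unfold sinhSqAntideriv
  linear_combination h / 2

lemma sinhSqAntideriv_add_sinh_sq (x : ℝ) :
    sinhSqAntideriv x + sinh x ^ 2 / 2 = (exp (2 * x) - 1 - 2 * x) / 4 := by
  have h : sinh x * (cosh x + sinh x) = (exp (2 * x) - 1) / 2 := by
    rw [cosh_add_sinh, sinh_eq, two_mul, exp_add]
    have h : exp (-x) * exp x = 1 := by rw [← exp_add, neg_add_cancel, exp_zero]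
    linear_combination -h / 2
  unfold sinhSqAntideriv
  linear_combination h / 2

lemma exp_sub_one_sub_le {t : ℝ} (ht : 0 ≤ t) : exp t - 1 - t ≤ t ^ 2 / 2 * exp t := by
  let g : ℝ → ℝ := fun s ↦ s ^ 2 / 2 * exp s - exp s + 1 + s
  have hg : ∀ s, HasDerivAt g (s ^ 2 / 2 * exp s + (s * exp s - exp s + 1)) s := fun s ↦ by
    refine ((((((hasDerivAt_pow 2 s).div_const 2).mul (hasDerivAt_exp s)).sub
      (hasDerivAt_exp s)).add_const 1).add (hasDerivAt_id s)).congr_deriv ?_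
    push_cast
    ring
  have hmono : MonotoneOn g (Ici 0) := by
    refine monotoneOn_of_deriv_nonneg (convex_Ici 0) (by fun_prop)
      (fun s _ ↦ (hg s).differentiableAt.differentiableWithinAt) fun s _ ↦ ?_
    have h1 : 1 - s ≤ exp (-s) := by linarith [add_one_le_exp (-s)]
    have h2 : exp s * exp (-s) = 1 := by rw [← exp_add, add_neg_cancel, exp_zero]
    rw [(hg s).deriv]
    nlinarith [exp_pos s, sq_nonneg s, mul_le_mul_of_nonneg_left h1 (exp_pos s).le]
  have := hmono self_mem_Ici ht ht
  simp only [g] at this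
  norm_num at this
  linarith

lemma exp_mul_sinh_le_sinh_add {x : ℝ} (hx : 0 ≤ x) (y : ℝ) :
    exp x * sinh y ≤ sinh (x + y) := by
  have h : sinh (x + y) - exp x * sinh y = sinh x * exp (-y) := by
    rw [sinh_add, ← cosh_add_sinh, ← cosh_sub_sinh]
    ring
  nlinarith [sinh_nonneg_iff.mpr hx, exp_pos (-y)]

lemma sinh_sq_mul_sinhSqAntideriv_add_le {x y : ℝ} (hx : 0 ≤ x) (hy : 0 ≤ y) :
    sinh y ^ 2 * sinhSqAntideriv x + sinh x ^ 2 * sinhSqAntideriv y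
      ≤ x ^ 2 / 2 * sinh (x + y) ^ 2 :=
  calc sinh y ^ 2 * sinhSqAntideriv x + sinh x ^ 2 * sinhSqAntideriv y
      ≤ sinh y ^ 2 * (sinhSqAntideriv x + sinh x ^ 2 / 2) := by
        nlinarith [sinhSqAntideriv_le y, sq_nonneg (sinh x), sq_nonneg (sinh y)]
    _ ≤ sinh y ^ 2 * ((2 * x) ^ 2 / 2 * exp (2 * x) / 4) := by
        rw [sinhSqAntideriv_add_sinh_sq]
        have := exp_sub_one_sub_le (by positivity : 0 ≤ 2 * x)
        gcongr
    _ = x ^ 2 / 2 * (exp x * sinh y) ^ 2 := by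
        rw [show 2 * x = x + x by ring, exp_add]
        ring
    _ ≤ x ^ 2 / 2 * sinh (x + y) ^ 2 := by
        have := exp_mul_sinh_le_sinh_add hx y
        have : 0 ≤ exp x * sinh y := mul_nonneg (exp_pos x).le (sinh_nonneg_iff.mpr hy)
        gcongr

lemma sinh_sq_mul_sinhSqAntideriv_add_le_min {x y : ℝ} (hx : 0 ≤ x) (hy : 0 ≤ y) :
    sinh y ^ 2 * sinhSqAntideriv x + sinh x ^ 2 * sinhSqAntideriv y
      ≤ min x y ^ 2 / 2 * sinh (x + y) ^ 2 := by
  rcases le_total x y with h | h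
  · rw [min_eq_left h]
    exact sinh_sq_mul_sinhSqAntideriv_add_le hx hy
  · rw [min_eq_right h, add_comm x, add_comm (sinh y ^ 2 * _)]
    exact sinh_sq_mul_sinhSqAntideriv_add_le hy hx

lemma integral_sinh_mul_sub_sq {k : ℝ} (hk : k ≠ 0) (a p q : ℝ) :
    ∫ s in p..q, sinh (k * (s - a)) ^ 2
      = (sinhSqAntideriv (k * (q - a)) - sinhSqAntideriv (k * (p - a))) / k := by
  have hderiv : ∀ s ∈ uIcc p q,
      HasDerivAt (fun s ↦ sinhSqAntideriv (k * (s - a)) / k) (sinh (k * (s - a)) ^ 2) s := by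
    intro s _
    have := ((hasDerivAt_sinhSqAntideriv _).comp s
      (((hasDerivAt_id s).sub_const a).const_mul k)).div_const k
    refine this.congr_deriv ?_
    simp only [id]
    field_simp
  rw [integral_eq_sub_of_hasDerivAt hderiv (by apply Continuous.intervalIntegrable; fun_prop)]
  ring

lemma sq_integral_mul_le {f g : ℝ → ℝ} {p q : ℝ} (hpq : p ≤ q)
    (hf : IntervalIntegrable (fun s ↦ f s ^ 2) volume p q)
    (hg : IntervalIntegrable (fun s ↦ g s ^ 2) volume p q)
    (hfg : IntervalIntegrable (fun s ↦ f s * g s) volume p q) :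
    (∫ s in p..q, f s * g s) ^ 2 ≤ (∫ s in p..q, f s ^ 2) * ∫ s in p..q, g s ^ 2 := by
  have hquad : ∀ t : ℝ, 0 ≤ (∫ s in p..q, f s ^ 2) * (t * t)
      + 2 * (∫ s in p..q, f s * g s) * t + ∫ s in p..q, g s ^ 2 := fun t ↦ by
    have hexpand : ∫ s in p..q, (t * f s + g s) ^ 2 = (∫ s in p..q, f s ^ 2) * (t * t)
        + 2 * (∫ s in p..q, f s * g s) * t + ∫ s in p..q, g s ^ 2 := by
      have hsq : ∀ s, (t * f s + g s) ^ 2 = t ^ 2 * f s ^ 2 + 2 * t * (f s * g s) + g s ^ 2 :=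
        fun s ↦ by ring
      simp only [hsq]
      rw [integral_add ((hf.const_mul _).add (hfg.const_mul _)) hg,
        integral_add (hf.const_mul _) (hfg.const_mul _), intervalIntegral.integral_const_mul,
        intervalIntegral.integral_const_mul]
      ring
    exact hexpand ▸ integral_nonneg hpq fun s _ ↦ sq_nonneg _
  have := discrim_le_zero hquad
  rw [discrim] at this
  linarith

lemma abs_integral_mul_le_sqrt_mul_sqrt {f g : ℝ → ℝ} {p q : ℝ} (hpq : p ≤ q)
    (hf : IntervalIntegrable (fun s ↦ f s ^ 2) volume p q)
    (hg : IntervalIntegrable (fun s ↦ g s ^ 2) volume p q)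
    (hfg : IntervalIntegrable (fun s ↦ f s * g s) volume p q) :
    |∫ s in p..q, f s * g s| ≤ √(∫ s in p..q, f s ^ 2) * √(∫ s in p..q, g s ^ 2) := by
  rw [← sqrt_mul (integral_nonneg hpq fun s _ ↦ sq_nonneg (f s))]
  exact abs_le_sqrt (sq_integral_mul_le hpq hf hg hfg)

lemma hasDerivAt_deriv_of_contDiff_two {f : ℝ → ℝ} (hf : ContDiff ℝ 2 f) (x : ℝ) :
    HasDerivAt (deriv f) (iteratedDeriv 2 f x) x := by
  have := (hf.differentiable_iteratedDeriv 1 (by norm_num) x).hasDerivAt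
  rw [← iteratedDeriv_succ, iteratedDeriv_one] at this
  exact this

lemma integral_sinh_mul_iteratedDeriv_sub {f : ℝ → ℝ} (hf : ContDiff ℝ 2 f) (k a p q : ℝ) :
    ∫ s in p..q, sinh (k * (s - a)) * (iteratedDeriv 2 f s - k ^ 2 * f s)
      = (sinh (k * (q - a)) * deriv f q - k * cosh (k * (q - a)) * f q)
        - (sinh (k * (p - a)) * deriv f p - k * cosh (k * (p - a)) * f p) := by
  have hlin : ∀ s, HasDerivAt (fun s ↦ k * (s - a)) k s := fun s ↦ by
    simpa using ((hasDerivAt_id s).sub_const a).const_mul k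
  have hderiv : ∀ s ∈ uIcc p q, HasDerivAt
      (fun s ↦ sinh (k * (s - a)) * deriv f s - k * cosh (k * (s - a)) * f s)
      (sinh (k * (s - a)) * (iteratedDeriv 2 f s - k ^ 2 * f s)) s := by
    intro s _
    have := ((hlin s).sinh.mul (hasDerivAt_deriv_of_contDiff_two hf s)).sub
      (((hlin s).cosh.const_mul k).mul (hf.differentiable (by norm_num) s).hasDerivAt)
    refine this.congr_deriv ?_
    ring
  refine integral_eq_sub_of_hasDerivAt hderiv (Continuous.intervalIntegrable ?_ p q)
  have := hf.continuous_iteratedDeriv 2 le_rfl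
  have := hf.continuous
  fun_prop

lemma mul_sinh_mul_eq_integral {w : ℝ → ℝ} (hw : ContDiff ℝ 2 w) (hw0 : w 0 = 0)
    (hw1 : w 1 = 0) (k z : ℝ) :
    k * sinh k * w z
      = sinh (k * z) * (∫ s in z..1, sinh (k * (s - 1)) * (iteratedDeriv 2 w s - k ^ 2 * w s))
        - sinh (k * (1 - z))
          * ∫ s in 0..z, sinh (k * s) * (iteratedDeriv 2 w s - k ^ 2 * w s) := by
  have hleft := integral_sinh_mul_iteratedDeriv_sub hw k 0 0 z
  have hright := integral_sinh_mul_iteratedDeriv_sub hw k 1 z 1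
  simp only [sub_zero, sub_self, mul_zero, sinh_zero, cosh_zero, hw0, hw1] at hleft hright
  have hsinh :
      sinh k = sinh (k * z) * cosh (k * (1 - z)) + cosh (k * z) * sinh (k * (1 - z)) := by
    rw [← sinh_add]
    ring_nf
  rw [hleft, hright, show k * (z - 1) = -(k * (1 - z)) by ring, sinh_neg, cosh_neg]
  linear_combination k * w z * hsinh

lemma sinh_mul_eq_integral_of_forcing {k : ℝ} (hk : k ≠ 0) {w ζ : ℝ → ℝ} (hw : ContDiff ℝ 2 w)
    (hw0 : w 0 = 0) (hw1 : w 1 = 0)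
    (hrel : ∀ z ∈ Icc (0 : ℝ) 1, iteratedDeriv 2 w z - k ^ 2 * w z = k * ζ z)
    {z : ℝ} (hz : z ∈ Icc (0 : ℝ) 1) :
    sinh k * w z = sinh (k * z) * (∫ s in z..1, sinh (k * (s - 1)) * ζ s)
      - sinh (k * (1 - z)) * ∫ s in 0..z, sinh (k * s) * ζ s := by
  have hleft : ∫ s in 0..z, sinh (k * s) * (iteratedDeriv 2 w s - k ^ 2 * w s)
      = k * ∫ s in 0..z, sinh (k * s) * ζ s := by
    rw [← intervalIntegral.integral_const_mul]
    refine integral_congr fun s hs ↦ ?_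
    rw [uIcc_of_le hz.1] at hs
    simp only [hrel s ⟨hs.1, hs.2.trans hz.2⟩]
    ring
  have hright : ∫ s in z..1, sinh (k * (s - 1)) * (iteratedDeriv 2 w s - k ^ 2 * w s)
      = k * ∫ s in z..1, sinh (k * (s - 1)) * ζ s := by
    rw [← intervalIntegral.integral_const_mul]
    refine integral_congr fun s hs ↦ ?_
    rw [uIcc_of_le hz.2] at hs
    simp only [hrel s ⟨hz.1.trans hs.1, hs.2⟩]
    ring
  have := mul_sinh_mul_eq_integral hw hw0 hw1 k z
  rw [hleft, hright] at this
  exact mul_left_cancel₀ hk (by linear_combination this)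

lemma abs_mul_integral_sub_mul_integral_le {u v ζ : ℝ → ℝ} (hu : Continuous u)
    (hv : Continuous v) (hζ : Continuous ζ) (α β : ℝ) {z : ℝ} (hz : z ∈ Icc (0 : ℝ) 1) :
    |α * (∫ s in z..1, v s * ζ s) - β * ∫ s in 0..z, u s * ζ s|
      ≤ √(α ^ 2 * (∫ s in z..1, v s ^ 2) + β ^ 2 * ∫ s in 0..z, u s ^ 2)
        * √(∫ s in 0..1, ζ s ^ 2) := by
  have hleft := abs_integral_mul_le_sqrt_mul_sqrt hz.1 ((hu.pow 2).intervalIntegrable 0 z)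
    ((hζ.pow 2).intervalIntegrable 0 z) ((hu.mul hζ).intervalIntegrable 0 z)
  have hright := abs_integral_mul_le_sqrt_mul_sqrt hz.2 ((hv.pow 2).intervalIntegrable z 1)
    ((hζ.pow 2).intervalIntegrable z 1) ((hv.mul hζ).intervalIntegrable z 1)
  have hsq_nonneg {f : ℝ → ℝ} {p q : ℝ} (hpq : p ≤ q) : 0 ≤ ∫ s in p..q, f s ^ 2 :=
    integral_nonneg hpq fun s _ ↦ sq_nonneg (f s)
  have hcs := sum_sqrt_mul_sqrt_le (ι := Fin 2) Finset.univ
    (f := ![α ^ 2 * ∫ s in z..1, v s ^ 2, β ^ 2 * ∫ s in 0..z, u s ^ 2])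
    (g := ![∫ s in z..1, ζ s ^ 2, ∫ s in 0..z, ζ s ^ 2])
    (Fin.forall_fin_two.mpr
      ⟨mul_nonneg (sq_nonneg α) (hsq_nonneg hz.2), mul_nonneg (sq_nonneg β) (hsq_nonneg hz.1)⟩)
    (Fin.forall_fin_two.mpr ⟨hsq_nonneg hz.2, hsq_nonneg hz.1⟩)
  simp only [Fin.sum_univ_two, Matrix.cons_val_zero, Matrix.cons_val_one] at hcs
  rw [add_comm (∫ s in z..1, ζ s ^ 2),
    integral_add_adjacent_intervals (f := fun s ↦ ζ s ^ 2)
      ((hζ.pow 2).intervalIntegrable 0 z) ((hζ.pow 2).intervalIntegrable z 1)] at hcs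
  calc |α * (∫ s in z..1, v s * ζ s) - β * ∫ s in 0..z, u s * ζ s|
      ≤ |α| * |∫ s in z..1, v s * ζ s| + |β| * |∫ s in 0..z, u s * ζ s| := by
        rw [← abs_mul, ← abs_mul]
        exact abs_sub _ _
    _ ≤ |α| * (√(∫ s in z..1, v s ^ 2) * √(∫ s in z..1, ζ s ^ 2))
        + |β| * (√(∫ s in 0..z, u s ^ 2) * √(∫ s in 0..z, ζ s ^ 2)) := by gcongr
    _ = √(α ^ 2 * ∫ s in z..1, v s ^ 2) * √(∫ s in z..1, ζ s ^ 2)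
        + √(β ^ 2 * ∫ s in 0..z, u s ^ 2) * √(∫ s in 0..z, ζ s ^ 2) := by
        rw [sqrt_mul (sq_nonneg α), sqrt_mul (sq_nonneg β), sqrt_sq_eq_abs, sqrt_sq_eq_abs]
        ring
    _ ≤ _ := hcs

lemma sinh_sq_mul_integral_add_le {k : ℝ} (hk : 0 < k) {z : ℝ} (hz : z ∈ Icc (0 : ℝ) 1) :
    sinh (k * z) ^ 2 * (∫ s in z..1, sinh (k * (s - 1)) ^ 2)
        + sinh (k * (1 - z)) ^ 2 * ∫ s in 0..z, sinh (k * s) ^ 2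
      ≤ (sinh k * √(k / 2) * min z (1 - z)) ^ 2 := by
  have hleft := integral_sinh_mul_sub_sq hk.ne' 0 0 z
  simp only [sub_zero, mul_zero] at hleft
  rw [hleft, integral_sinh_mul_sub_sq hk.ne' 1 z 1, sub_self, mul_zero,
    show k * (z - 1) = -(k * (1 - z)) by ring, sinhSqAntideriv_neg]
  have hkey := sinh_sq_mul_sinhSqAntideriv_add_le_min (x := k * z) (y := k * (1 - z))
    (by nlinarith [hz.1]) (by nlinarith [hz.2])
  rw [show k * z + k * (1 - z) = k by ring, ← mul_min_of_nonneg _ _ hk.le] at hkey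
  have h0 : sinhSqAntideriv 0 = 0 := by simp [sinhSqAntideriv]
  calc sinh (k * z) ^ 2 * ((sinhSqAntideriv 0 - -sinhSqAntideriv (k * (1 - z))) / k)
        + sinh (k * (1 - z)) ^ 2 * ((sinhSqAntideriv (k * z) - sinhSqAntideriv 0) / k)
      = (sinh (k * (1 - z)) ^ 2 * sinhSqAntideriv (k * z)
          + sinh (k * z) ^ 2 * sinhSqAntideriv (k * (1 - z))) / k := by
        rw [h0]
        ring
    _ ≤ (k * min z (1 - z)) ^ 2 / 2 * sinh k ^ 2 / k := by gcongr
    _ = (sinh k * √(k / 2) * min z (1 - z)) ^ 2 := by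
        rw [mul_pow, mul_pow, mul_pow, sq_sqrt (by positivity)]
        field_simp

lemma two_le_three_rpow : (2 : ℝ) ≤ 3 ^ ((3 : ℝ) / 4) := by
  have h : ((3 : ℝ) ^ ((3 : ℝ) / 4)) ^ 4 = 27 := by
    rw [← rpow_natCast, ← rpow_mul (by norm_num)]
    norm_num
  by_contra! hlt
  have := pow_lt_pow_left₀ hlt (by positivity) (by norm_num : (4 : ℕ) ≠ 0)
  norm_num [h] at this

lemma sqrt_div_two_le {k : ℝ} (hk : 0 ≤ k) :
    √(k / 2) ≤ 3 ^ ((3 : ℝ) / 4) / 2 ^ ((3 : ℝ) / 2) * √k := by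
  have h2 : (2 : ℝ) ^ ((3 : ℝ) / 2) = 2 * √2 := by
    rw [show (3 : ℝ) / 2 = 1 + 1 / 2 by norm_num, rpow_add (by norm_num), rpow_one,
      ← sqrt_eq_rpow]
  calc √(k / 2) = 2 / (2 * √2) * √k := by
        rw [sqrt_div hk]
        field_simp
    _ ≤ 3 ^ ((3 : ℝ) / 4) / 2 ^ ((3 : ℝ) / 2) * √k := by
        rw [h2]
        gcongr
        exact two_le_three_rpow

theorem pointwise_velocity_estimate_stress_free_general
    (k : ℝ) (hk : 0 < k) (w ζ : ℝ → ℝ)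
    (hw : ContDiff ℝ 2 w) (hζ : Continuous ζ)
    (hw0 : w 0 = 0) (hw1 : w 1 = 0)
    (hrel : ∀ z ∈ Set.Icc (0:ℝ) 1, iteratedDeriv 2 w z - k^2 * w z = k * ζ z) :
    ∀ z ∈ Set.Icc (0:ℝ) 1,
      |w z| ≤ (3 ^ ((3:ℝ)/4) / 2 ^ ((3:ℝ)/2)) * k ^ ((1:ℝ)/2) * min z (1 - z) *
        (∫ s in (0:ℝ)..1, (ζ s)^2) ^ ((1:ℝ)/2) := by
  intro z hz
  have hmin : 0 ≤ min z (1 - z) := le_min hz.1 (by linarith [hz.2])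
  have hsinh : 0 < sinh k := sinh_pos_iff.mpr hk
  have hgreen :
      sinh k * |w z| ≤ sinh k * (√(k / 2) * min z (1 - z) * √(∫ s in 0..1, ζ s ^ 2)) := by
    rw [← abs_of_pos hsinh, ← abs_mul,
      sinh_mul_eq_integral_of_forcing hk.ne' hw hw0 hw1 hrel hz]
    refine (abs_mul_integral_sub_mul_integral_le (by fun_prop) (by fun_prop) hζ _ _ hz).trans ?_
    rw [abs_of_pos hsinh, ← mul_assoc, ← mul_assoc]
    gcongr
    exact sqrt_le_left (by positivity) |>.mpr (sinh_sq_mul_integral_add_le hk hz)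
  rw [← sqrt_eq_rpow, ← sqrt_eq_rpow]
  calc |w z| ≤ √(k / 2) * min z (1 - z) * √(∫ s in 0..1, ζ s ^ 2) :=
        le_of_mul_le_mul_left hgreen hsinh
    _ ≤ _ := by
        gcongr
        exact sqrt_div_two_le hk.le

/-- Pointwise velocity estimate (Lemma 3 of the paper, after Whitehead–Doering 2011):
if `w'' - k²w = kζ` on `[0,1]` with `w(0) = w(1) = ζ(0) = ζ(1) = 0`, then for all
`z ∈ [0,1]`, `|w z| ≤ c₁ k^{1/2} min(z, 1-z) ‖ζ‖₂` with `c₁ = 3^{3/4}/2^{3/2}`. -/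
theorem pointwise_velocity_estimate_stress_free
    (k : ℝ) (hk : 0 < k) (w ζ : ℝ → ℝ)
    (hw : ContDiff ℝ 2 w) (hζ : Continuous ζ)
    (hw0 : w 0 = 0) (hw1 : w 1 = 0) (hζ0 : ζ 0 = 0) (hζ1 : ζ 1 = 0)
    (hrel : ∀ z ∈ Set.Icc (0:ℝ) 1, iteratedDeriv 2 w z - k^2 * w z = k * ζ z) :
    ∀ z ∈ Set.Icc (0:ℝ) 1,
      |w z| ≤ (3 ^ ((3:ℝ)/4) / 2 ^ ((3:ℝ)/2)) * k ^ ((1:ℝ)/2) * min z (1 - z) *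
        (∫ s in (0:ℝ)..1, (ζ s)^2) ^ ((1:ℝ)/2) :=
  pointwise_velocity_estimate_stress_free_general k hk w ζ hw hζ hw0 hw1 hrel
end

section
/- Let δ, ε ∈ (0, 1/3], A ∈ (0,1), β > 0, k > 0 and R > 0, and set c₀ := √(2/(7−√41)). Let τ' : (0,1) → ℝ be given by τ'(z) = −(1−A)/δ on (0,δ), τ'(z) = 0 on (δ,1−ε), and τ'(z) = −(A(1−ε)/ε)/z² on (1−ε,1). Suppose w : [0,1] → ℝ is twice continuously differentiable with w(0) = w(1) = 0 and w'(0) = w'(1) = 0, T : [0,1] → ℝ is continuously differentiable with T(0) = T(1) = 0, and sup_{z∈[0,1]} |w''(z)| ≤ c₀ R k (∫₀¹ T² dz)^{1/2}. Then ∫₀¹ τ'(z) w(z) T(z) dz ≥ −β k² ∫₀¹ T(z)² dz − ( c₀² δ⁵ R²/(98β) + 25 c₀² A² ε⁵ R²/(392β) ) ∫₀¹ T'(z)² dz. -/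
/-!
On the bulk `(δ, 1 - ε)` the profile is flat, so only the two boundary layers contribute, and
there the boundary conditions make `w` and `T` small: Taylor's formula with
`|w''| ≤ M := c₀ R k ‖T‖₂` gives `|w z| ≤ M z² / 2`, and Cauchy–Schwarz gives
`|T z| ≤ √z ‖T'‖₂` (with `1 - z` in place of `z` near the top). As `|τ'| ≤ 1 / δ` in the lower
layer and `|τ'| ≤ 3A / (2ε)` in the upper one (where `z ≥ 1 - ε ≥ 2/3`), the layers contribute
at most `M ‖T'‖₂ δ^{5/2} / 7` and `3 A M ‖T'‖₂ ε^{5/2} / 14`. Young's inequality then splits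
`k ‖T‖₂ · c₀ R ‖T'‖₂` into the two terms of the bound.
-/

open MeasureTheory Set intervalIntegral

theorem sq_intervalIntegral_le_mul_integral_sq {f : ℝ → ℝ} {a b : ℝ} (hab : a ≤ b)
    (hf : IntervalIntegrable f volume a b)
    (hf2 : IntervalIntegrable (fun x => f x ^ 2) volume a b) :
    (∫ x in a..b, f x) ^ 2 ≤ (b - a) * ∫ x in a..b, f x ^ 2 := by
  set I := ∫ x in a..b, f x
  have hexpand : ∫ x in a..b, ((b - a) * f x - I) ^ 2
      = (b - a) * ((b - a) * (∫ x in a..b, f x ^ 2) - I ^ 2) := by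
    have : ∀ x, ((b - a) * f x - I) ^ 2 = (b - a) ^ 2 * f x ^ 2 - 2 * (b - a) * I * f x + I ^ 2 :=
      fun x => by ring
    simp only [this]
    rw [integral_add ((hf2.const_mul _).sub (hf.const_mul _)) intervalIntegrable_const,
      integral_sub (hf2.const_mul _) (hf.const_mul _), intervalIntegral.integral_const_mul,
      intervalIntegral.integral_const_mul,
      intervalIntegral.integral_const, smul_eq_mul]
    ring
  have hnonneg : 0 ≤ (b - a) * ((b - a) * (∫ x in a..b, f x ^ 2) - I ^ 2) :=
    hexpand ▸ integral_nonneg hab fun x _ => sq_nonneg _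
  rcases hab.eq_or_lt with rfl | hlt
  · simp [I]
  · nlinarith [(mul_nonneg_iff_of_pos_left (sub_pos.2 hlt)).1 hnonneg]

theorem sq_sub_le_mul_integral_deriv_sq {f : ℝ → ℝ} (hf : ContDiff ℝ 1 f) {a b : ℝ}
    (hab : a ≤ b) : (f b - f a) ^ 2 ≤ (b - a) * ∫ x in a..b, deriv f x ^ 2 := by
  have hf' : Continuous (deriv f) := hf.continuous_deriv le_rfl
  rw [← integral_deriv_eq_sub (fun x _ => hf.differentiable one_ne_zero x)
    (hf'.intervalIntegrable _ _)]
  exact sq_intervalIntegral_le_mul_integral_sq hab (hf'.intervalIntegrable _ _)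
    ((hf'.pow 2).intervalIntegrable _ _)

theorem abs_le_sqrt_mul_sqrt_integral_deriv_sq_of_left {f : ℝ → ℝ} (hf : ContDiff ℝ 1 f)
    {a b x : ℝ} (hx : x ∈ Icc a b) (ha : f a = 0) :
    |f x| ≤ √(x - a) * √(∫ y in a..b, deriv f y ^ 2) := by
  rw [← Real.sqrt_mul (sub_nonneg.2 hx.1)]
  apply Real.abs_le_sqrt
  calc f x ^ 2 = (f x - f a) ^ 2 := by rw [ha, sub_zero]
    _ ≤ (x - a) * ∫ y in a..x, deriv f y ^ 2 := sq_sub_le_mul_integral_deriv_sq hf hx.1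
    _ ≤ (x - a) * ∫ y in a..b, deriv f y ^ 2 := by
      refine mul_le_mul_of_nonneg_left (integral_mono_interval le_rfl hx.1 hx.2
        (.of_forall fun y => sq_nonneg _) ?_) (sub_nonneg.2 hx.1)
      exact ((hf.continuous_deriv le_rfl).pow 2).intervalIntegrable _ _

theorem abs_le_sqrt_mul_sqrt_integral_deriv_sq_of_right {f : ℝ → ℝ} (hf : ContDiff ℝ 1 f)
    {a b x : ℝ} (hx : x ∈ Icc a b) (hb : f b = 0) :
    |f x| ≤ √(b - x) * √(∫ y in a..b, deriv f y ^ 2) := by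
  rw [← Real.sqrt_mul (sub_nonneg.2 hx.2)]
  apply Real.abs_le_sqrt
  calc f x ^ 2 = (f b - f x) ^ 2 := by rw [hb, zero_sub, neg_sq]
    _ ≤ (b - x) * ∫ y in x..b, deriv f y ^ 2 := sq_sub_le_mul_integral_deriv_sq hf hx.2
    _ ≤ (b - x) * ∫ y in a..b, deriv f y ^ 2 := by
      refine mul_le_mul_of_nonneg_left (integral_mono_interval hx.1 hx.2 le_rfl
        (.of_forall fun y => sq_nonneg _) ?_) (sub_nonneg.2 hx.2)
      exact ((hf.continuous_deriv le_rfl).pow 2).intervalIntegrable _ _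

theorem abs_sub_le_integral_of_abs_deriv_le {f φ : ℝ → ℝ} (hf : ContDiff ℝ 1 f) {a b : ℝ}
    (hab : a ≤ b) (hφ : IntervalIntegrable φ volume a b)
    (h : ∀ x ∈ Icc a b, |deriv f x| ≤ φ x) : |f b - f a| ≤ ∫ x in a..b, φ x := by
  rw [← integral_deriv_eq_sub (fun x _ => hf.differentiable one_ne_zero x)
    ((hf.continuous_deriv le_rfl).intervalIntegrable _ _), ← Real.norm_eq_abs]
  exact norm_integral_le_of_norm_le hab (.of_forall fun x hx => h x (Ioc_subset_Icc_self hx)) hφ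

theorem abs_sub_le_of_deriv_left_eq_zero {f : ℝ → ℝ} (hf : ContDiff ℝ 2 f) {a b M : ℝ}
    (hab : a ≤ b) (hM : ∀ x ∈ Icc a b, |deriv (deriv f) x| ≤ M) (ha : deriv f a = 0) :
    |f b - f a| ≤ M * (b - a) ^ 2 / 2 := by
  have hf' : ContDiff ℝ 1 (deriv f) := hf.deriv'
  have hslope : ∀ x ∈ Icc a b, |deriv f x| ≤ M * (x - a) := fun x hx => by
    simpa [ha, mul_comm] using abs_sub_le_integral_of_abs_deriv_le hf' hx.1
      intervalIntegrable_const fun y hy => hM y ⟨hy.1, hy.2.trans hx.2⟩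
  calc |f b - f a| ≤ ∫ x in a..b, M * (x - a) :=
        abs_sub_le_integral_of_abs_deriv_le (hf.of_le one_le_two) hab
          (Continuous.intervalIntegrable (by fun_prop) _ _) hslope
    _ = M * (b - a) ^ 2 / 2 := by
        rw [intervalIntegral.integral_const_mul, integral_comp_sub_right fun x => x,
          integral_id]
        ring

theorem abs_sub_le_of_deriv_right_eq_zero {f : ℝ → ℝ} (hf : ContDiff ℝ 2 f) {a b M : ℝ}
    (hab : a ≤ b) (hM : ∀ x ∈ Icc a b, |deriv (deriv f) x| ≤ M) (hb : deriv f b = 0) :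
    |f b - f a| ≤ M * (b - a) ^ 2 / 2 := by
  have hf' : ContDiff ℝ 1 (deriv f) := hf.deriv'
  have hslope : ∀ x ∈ Icc a b, |deriv f x| ≤ M * (b - x) := fun x hx => by
    simpa [hb, abs_sub_comm, mul_comm] using abs_sub_le_integral_of_abs_deriv_le hf' hx.2
      intervalIntegrable_const fun y hy => hM y ⟨hx.1.trans hy.1, hy.2⟩
  calc |f b - f a| ≤ ∫ x in a..b, M * (b - x) :=
        abs_sub_le_integral_of_abs_deriv_le (hf.of_le one_le_two) hab
          (Continuous.intervalIntegrable (by fun_prop) _ _) hslope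
    _ = M * (b - a) ^ 2 / 2 := by
        rw [intervalIntegral.integral_const_mul, integral_comp_sub_left fun x => x,
          integral_id]
        ring

theorem abs_le_of_iSup_abs_le {α : Type*} [TopologicalSpace α] {s : Set α} (hs : IsCompact s)
    {f : α → ℝ} (hf : ContinuousOn f s) {M : ℝ} (h : (⨆ z : s, |f z|) ≤ M) {z : α}
    (hz : z ∈ s) : |f z| ≤ M := by
  have : CompactSpace s := isCompact_iff_compactSpace.mp hs
  exact (le_ciSup (isCompact_range hf.domRestrict.abs).bddAbove ⟨z, hz⟩).trans h

theorem integral_sq_mul_sqrt {c : ℝ} (hc : 0 ≤ c) :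
    ∫ z in (0:ℝ)..c, z ^ 2 * √z = 2 / 7 * (c ^ 3 * √c) := by
  have hpow : ∀ {z : ℝ} (n : ℕ), 0 ≤ z → z ^ n * √z = z ^ ((n : ℝ) + 1 / 2) := fun n hz => by
    rw [Real.sqrt_eq_rpow, Real.rpow_add' hz (by positivity), Real.rpow_natCast]
  rw [integral_congr fun z hz => hpow 2 (uIcc_of_le hc ▸ hz).1, hpow 3 hc,
    integral_rpow (Or.inl (by norm_num))]
  norm_num
  ring

theorem abs_integral_mul_mul_le {κ u v : ℝ → ℝ} {c K M P : ℝ} (hc : 0 ≤ c)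
    (hκ : ∀ z ∈ Ioo 0 c, |κ z| ≤ K) (hu : ∀ z ∈ Ioo 0 c, |u z| ≤ M * z ^ 2 / 2)
    (hv : ∀ z ∈ Ioo 0 c, |v z| ≤ √z * P) :
    |∫ z in (0:ℝ)..c, κ z * u z * v z| ≤ K * M * P * (c ^ 3 * √c) / 7 := by
  have hbound : ∀ᵐ z, z ∈ Ioc 0 c → ‖κ z * u z * v z‖ ≤ K * (M * z ^ 2 / 2) * (√z * P) := by
    filter_upwards [volume.ae_ne c] with z hzc hz
    have hz : z ∈ Ioo 0 c := ⟨hz.1, hz.2.lt_of_ne hzc⟩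
    rw [Real.norm_eq_abs, abs_mul, abs_mul]
    exact mul_le_mul (mul_le_mul (hκ z hz) (hu z hz) (abs_nonneg _)
      ((abs_nonneg _).trans (hκ z hz))) (hv z hz) (abs_nonneg _)
      (mul_nonneg ((abs_nonneg _).trans (hκ z hz)) ((abs_nonneg _).trans (hu z hz)))
  calc |∫ z in (0:ℝ)..c, κ z * u z * v z|
      ≤ ∫ z in (0:ℝ)..c, K * (M * z ^ 2 / 2) * (√z * P) :=
        norm_integral_le_of_norm_le hc hbound (Continuous.intervalIntegrable (by fun_prop) _ _)
    _ = K * M * P / 2 * ∫ z in (0:ℝ)..c, z ^ 2 * √z := by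
        rw [← intervalIntegral.integral_const_mul]; congr 1; ext z; ring
    _ = K * M * P * (c ^ 3 * √c) / 7 := by rw [integral_sq_mul_sqrt hc]; ring

theorem integral_eq_add_of_eqOn_Ioo_zero {f : ℝ → ℝ} {a b c d : ℝ} (hbc : b ≤ c)
    (hab : IntervalIntegrable f volume a b) (hcd : IntervalIntegrable f volume c d)
    (h : EqOn f 0 (Ioo b c)) : ∫ x in a..d, f x = (∫ x in a..b, f x) + ∫ x in c..d, f x := by
  have hbc' : IntervalIntegrable f volume b c :=
    (intervalIntegrable_const (c := (0:ℝ))).congr_uIoo (uIoo_of_le hbc ▸ h.symm)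
  rw [← integral_add_adjacent_intervals (hab.trans hbc') hcd,
    ← integral_add_adjacent_intervals hab hbc', integral_congr_Ioo_of_le hbc h]
  simp

theorem mul_mul_add_le_young {β : ℝ} (hβ : 0 < β) (X Y a b : ℝ) :
    X * Y * (a + b) ≤ β * X ^ 2 + (a ^ 2 + b ^ 2) / (2 * β) * Y ^ 2 := by
  have hsos : β * X ^ 2 + (a ^ 2 + b ^ 2) / (2 * β) * Y ^ 2 - X * Y * (a + b)
      = ((2 * β * X - (a + b) * Y) ^ 2 + ((a - b) * Y) ^ 2) / (4 * β) := by
    field_simp; ring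
  exact sub_nonneg.1 (hsos ▸ by positivity)

theorem abs_integral_left_layer_le {τ' w T : ℝ → ℝ} {δ A M : ℝ} (hδ : δ ∈ Ioc 0 1)
    (hA : A ∈ Icc 0 1) (hτ : ∀ z ∈ Ioo 0 δ, τ' z = -(1 - A) / δ) (hw : ContDiff ℝ 2 w)
    (hw0 : w 0 = 0) (hw'0 : deriv w 0 = 0) (hM : ∀ z ∈ Icc 0 1, |deriv (deriv w) z| ≤ M)
    (hT : ContDiff ℝ 1 T) (hT0 : T 0 = 0) :
    |∫ z in (0:ℝ)..δ, τ' z * w z * T z|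
      ≤ M * √(∫ z in (0:ℝ)..1, deriv T z ^ 2) * (δ ^ 2 * √δ) / 7 := by
  have hzIcc : ∀ z ∈ Ioo 0 δ, z ∈ Icc (0:ℝ) 1 := fun z hz => ⟨hz.1.le, hz.2.le.trans hδ.2⟩
  have hlayer := abs_integral_mul_mul_le (κ := τ') (u := w) (v := T) (K := 1 / δ) hδ.1.le
    (fun z hz => by
      rw [hτ z hz, abs_div, abs_neg, abs_of_nonneg (sub_nonneg.2 hA.2), abs_of_pos hδ.1]
      gcongr <;> linarith [hA.1, hδ.1])
    (fun z hz => by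
      simpa [hw0] using abs_sub_le_of_deriv_left_eq_zero hw (hzIcc z hz).1
        (fun y hy => hM y ⟨hy.1, hy.2.trans (hzIcc z hz).2⟩) hw'0)
    (fun z hz => by simpa using abs_le_sqrt_mul_sqrt_integral_deriv_sq_of_left hT (hzIcc z hz) hT0)
  refine hlayer.trans_eq ?_
  field_simp

theorem abs_integral_right_layer_le {τ' w T : ℝ → ℝ} {ε A M : ℝ} (hε : ε ∈ Ioc 0 (1 / 3))
    (hA : 0 ≤ A) (hτ : ∀ z ∈ Ioo (1 - ε) 1, τ' z = -(A * (1 - ε) / ε) / z ^ 2)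
    (hw : ContDiff ℝ 2 w) (hw1 : w 1 = 0) (hw'1 : deriv w 1 = 0)
    (hM : ∀ z ∈ Icc 0 1, |deriv (deriv w) z| ≤ M) (hT : ContDiff ℝ 1 T) (hT1 : T 1 = 0) :
    |∫ z in (1 - ε)..1, τ' z * w z * T z|
      ≤ M * √(∫ z in (0:ℝ)..1, deriv T z ^ 2) * (3 * A * (ε ^ 2 * √ε)) / 14 := by
  obtain ⟨hε0, hε3⟩ := hε
  have hzIcc : ∀ y ∈ Ioo 0 ε, 1 - y ∈ Icc (0:ℝ) 1 := fun y hy =>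
    ⟨by linarith [hy.2], by linarith [hy.1]⟩
  have hreflect : ∫ z in (1 - ε)..1, τ' z * w z * T z
      = ∫ y in (0:ℝ)..ε, τ' (1 - y) * w (1 - y) * T (1 - y) := by
    simp [intervalIntegral.integral_comp_sub_left fun z => τ' z * w z * T z]
  have hlayer := abs_integral_mul_mul_le (κ := fun y => τ' (1 - y)) (u := fun y => w (1 - y))
    (v := fun y => T (1 - y)) (K := 3 * A / (2 * ε)) hε0.le
    (fun y hy => by
      have h1ε : 0 < 1 - ε := by linarith
      have h1y : 1 - ε < 1 - y := by linarith [hy.2]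
      have hcoef : 2 * (1 - ε) ≤ 3 * (1 - y) ^ 2 := by nlinarith
      have hsq : 0 < (1 - y) ^ 2 := pow_pos (h1ε.trans h1y) 2
      rw [hτ (1 - y) ⟨h1y, by linarith [hy.1]⟩, abs_div, abs_neg, abs_of_nonneg (by positivity),
        abs_of_pos hsq, div_div, div_le_div_iff₀ (by positivity) (by positivity)]
      nlinarith [mul_le_mul_of_nonneg_left hcoef (mul_nonneg hA hε0.le)])
    (fun y hy => by
      simpa [hw1, abs_sub_comm] using abs_sub_le_of_deriv_right_eq_zero hw (hzIcc y hy).2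
        (fun x hx => hM x ⟨(hzIcc y hy).1.trans hx.1, hx.2⟩) hw'1)
    (fun y hy => by
      simpa using abs_le_sqrt_mul_sqrt_integral_deriv_sq_of_right hT (hzIcc y hy) hT1)
  rw [hreflect]
  refine hlayer.trans_eq ?_
  field_simp
  ring

theorem integral_eq_add_boundary_layers {τ' w T : ℝ → ℝ} {δ ε A : ℝ} (hδ : 0 < δ)
    (hδε : δ < 1 - ε) (hε : 0 ≤ ε) (hτ1 : ∀ z ∈ Ioo 0 δ, τ' z = -(1 - A) / δ)
    (hτ2 : ∀ z ∈ Ioo δ (1 - ε), τ' z = 0)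
    (hτ3 : ∀ z ∈ Ioo (1 - ε) 1, τ' z = -(A * (1 - ε) / ε) / z ^ 2)
    (hw : Continuous w) (hT : Continuous T) :
    ∫ z in (0:ℝ)..1, τ' z * w z * T z
      = (∫ z in (0:ℝ)..δ, τ' z * w z * T z) + ∫ z in (1 - ε)..1, τ' z * w z * T z := by
  refine integral_eq_add_of_eqOn_Ioo_zero hδε.le ?_ ?_ fun z hz => by simp [hτ2 z hz]
  · refine (Continuous.intervalIntegrable (u := fun z => -(1 - A) / δ * w z * T z)
      (by fun_prop) 0 δ).congr_uIoo ?_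
    rw [uIoo_of_le hδ.le]
    exact fun z hz => by simp [hτ1 z hz]
  · refine (ContinuousOn.intervalIntegrable_of_Icc
      (u := fun z => -(A * (1 - ε) / ε) / z ^ 2 * w z * T z) (by linarith) ?_).congr_uIoo ?_
    · fun_prop (disch := intro z hz; nlinarith [hz.1])
    · rw [uIoo_of_le (by linarith)]
      exact fun z hz => by simp [hτ3 z hz]

theorem mul_mul_layer_sum_le {β : ℝ} (hβ : 0 < β) (X Y A : ℝ) {δ ε : ℝ} (hδ : 0 ≤ δ)
    (hε : 0 ≤ ε) :
    X * Y * (δ ^ 2 * √δ / 7 + 3 * A * (ε ^ 2 * √ε) / 14)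
      ≤ β * X ^ 2 + (δ ^ 5 / (98 * β) + 25 * A ^ 2 * ε ^ 5 / (392 * β)) * Y ^ 2 := by
  have hδ5 : δ ^ 5 = (δ ^ 2 * √δ) ^ 2 := by rw [mul_pow, Real.sq_sqrt hδ]; ring
  have hε5 : ε ^ 5 = (ε ^ 2 * √ε) ^ 2 := by rw [mul_pow, Real.sq_sqrt hε]; ring
  have hcoef : ((δ ^ 2 * √δ / 7) ^ 2 + (3 * A * (ε ^ 2 * √ε) / 14) ^ 2) / (2 * β)
      ≤ δ ^ 5 / (98 * β) + 25 * A ^ 2 * ε ^ 5 / (392 * β) := by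
    have hgap : δ ^ 5 / (98 * β) + 25 * A ^ 2 * ε ^ 5 / (392 * β)
        - ((δ ^ 2 * √δ / 7) ^ 2 + (3 * A * (ε ^ 2 * √ε) / 14) ^ 2) / (2 * β)
        = (4 * A * (ε ^ 2 * √ε)) ^ 2 / (392 * β) := by
      rw [hδ5, hε5]; field_simp; ring
    exact sub_nonneg.1 (hgap ▸ by positivity)
  calc X * Y * (δ ^ 2 * √δ / 7 + 3 * A * (ε ^ 2 * √ε) / 14)
      ≤ β * X ^ 2 + ((δ ^ 2 * √δ / 7) ^ 2 + (3 * A * (ε ^ 2 * √ε) / 14) ^ 2) / (2 * β) * Y ^ 2 :=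
        mul_mul_add_le_young hβ X Y _ _
    _ ≤ β * X ^ 2 + (δ ^ 5 / (98 * β) + 25 * A ^ 2 * ε ^ 5 / (392 * β)) * Y ^ 2 := by gcongr

theorem no_slip_sign_indefinite_term_estimate_general
    (δ ε A β k R c₀ : ℝ)
    (hδ : δ ∈ Set.Ioc (0:ℝ) (1/3)) (hε : ε ∈ Set.Ioc (0:ℝ) (1/3))
    (hA : A ∈ Set.Ioo (0:ℝ) 1) (hβ : 0 < β)
    (τ' : ℝ → ℝ)
    (hτ1 : ∀ z ∈ Set.Ioo (0:ℝ) δ, τ' z = -(1-A) / δ)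
    (hτ2 : ∀ z ∈ Set.Ioo δ (1-ε), τ' z = 0)
    (hτ3 : ∀ z ∈ Set.Ioo (1-ε) (1:ℝ), τ' z = -(A * (1-ε) / ε) / z^2)
    (w T : ℝ → ℝ) (hw : ContDiff ℝ 2 w) (hT : ContDiff ℝ 1 T)
    (hw0 : w 0 = 0) (hw1 : w 1 = 0) (hw'0 : deriv w 0 = 0) (hw'1 : deriv w 1 = 0)
    (hT0 : T 0 = 0) (hT1 : T 1 = 0)
    (hsup : (⨆ z : Set.Icc (0:ℝ) 1, |iteratedDeriv 2 w z.1|) ≤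
      c₀ * R * k * (∫ z in (0:ℝ)..1, (T z)^2) ^ ((1:ℝ)/2)) :
    (∫ z in (0:ℝ)..1, τ' z * w z * T z) ≥
      -(β * k^2 * ∫ z in (0:ℝ)..1, (T z)^2)
      - (c₀^2 * δ^5 * R^2 / (98 * β) + 25 * c₀^2 * A^2 * ε^5 * R^2 / (392 * β))
          * ∫ z in (0:ℝ)..1, (deriv T z)^2 := by
  obtain ⟨hδ0, hδ3⟩ := hδ
  obtain ⟨hε0, hε3⟩ := hε
  set S := (∫ z in (0:ℝ)..1, T z ^ 2) ^ ((1:ℝ) / 2) with hS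
  have hw'' : ∀ z ∈ Icc (0:ℝ) 1, |deriv (deriv w) z| ≤ c₀ * R * k * S := fun z hz => by
    simpa [iteratedDeriv_succ] using abs_le_of_iSup_abs_le isCompact_Icc
      (hw.continuous_iteratedDeriv 2 le_rfl).continuousOn hsup hz
  have hleft := abs_integral_left_layer_le ⟨hδ0, by linarith⟩ ⟨hA.1.le, hA.2.le⟩ hτ1 hw hw0 hw'0
    hw'' hT hT0
  have hright := abs_integral_right_layer_le ⟨hε0, hε3⟩ hA.1.le hτ3 hw hw1 hw'1 hw'' hT hT1
  set P := √(∫ z in (0:ℝ)..1, deriv T z ^ 2)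
  have hS2 : S ^ 2 = ∫ z in (0:ℝ)..1, T z ^ 2 := by
    rw [hS, ← Real.sqrt_eq_rpow, Real.sq_sqrt (integral_nonneg zero_le_one fun _ _ => sq_nonneg _)]
  have hP2 : P ^ 2 = ∫ z in (0:ℝ)..1, deriv T z ^ 2 :=
    Real.sq_sqrt (integral_nonneg zero_le_one fun _ _ => sq_nonneg _)
  have hyoung : k * S * (c₀ * R * P) * (δ ^ 2 * √δ / 7 + 3 * A * (ε ^ 2 * √ε) / 14)
      ≤ β * k ^ 2 * S ^ 2
        + (c₀^2 * δ^5 * R^2 / (98 * β) + 25 * c₀^2 * A^2 * ε^5 * R^2 / (392 * β)) * P ^ 2 :=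
    (mul_mul_layer_sum_le hβ (k * S) (c₀ * R * P) A hδ0.le hε0.le).trans_eq (by ring)
  rw [integral_eq_add_boundary_layers hδ0 (by linarith) hε0.le hτ1 hτ2 hτ3 hw.continuous
    hT.continuous, ← hS2, ← hP2]
  linarith [neg_abs_le (∫ z in (0:ℝ)..δ, τ' z * w z * T z),
    neg_abs_le (∫ z in (1 - ε)..1, τ' z * w z * T z)]

/-- Estimate on the sign-indefinite term of the no-slip spectral constraint:
`∫₀¹ τ' w T ≥ -β k² ‖T‖₂² - (c₀²δ⁵R²/(98β) + 25c₀²A²ε⁵R²/(392β)) ‖T'‖₂²`. -/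
theorem no_slip_sign_indefinite_term_estimate
    (δ ε A β k R c₀ : ℝ)
    (hδ : δ ∈ Set.Ioc (0:ℝ) (1/3)) (hε : ε ∈ Set.Ioc (0:ℝ) (1/3))
    (hA : A ∈ Set.Ioo (0:ℝ) 1) (hβ : 0 < β) (hk : 0 < k) (hR : 0 < R)
    (hc₀ : c₀ = Real.sqrt (2 / (7 - Real.sqrt 41)))
    (τ' : ℝ → ℝ)
    (hτ1 : ∀ z ∈ Set.Ioo (0:ℝ) δ, τ' z = -(1-A) / δ)
    (hτ2 : ∀ z ∈ Set.Ioo δ (1-ε), τ' z = 0)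
    (hτ3 : ∀ z ∈ Set.Ioo (1-ε) (1:ℝ), τ' z = -(A * (1-ε) / ε) / z^2)
    (w T : ℝ → ℝ) (hw : ContDiff ℝ 2 w) (hT : ContDiff ℝ 1 T)
    (hw0 : w 0 = 0) (hw1 : w 1 = 0) (hw'0 : deriv w 0 = 0) (hw'1 : deriv w 1 = 0)
    (hT0 : T 0 = 0) (hT1 : T 1 = 0)
    (hsup : (⨆ z : Set.Icc (0:ℝ) 1, |iteratedDeriv 2 w z.1|) ≤
      c₀ * R * k * (∫ z in (0:ℝ)..1, (T z)^2) ^ ((1:ℝ)/2)) :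
    (∫ z in (0:ℝ)..1, τ' z * w z * T z) ≥
      -(β * k^2 * ∫ z in (0:ℝ)..1, (T z)^2)
      - (c₀^2 * δ^5 * R^2 / (98 * β) + 25 * c₀^2 * A^2 * ε^5 * R^2 / (392 * β))
          * ∫ z in (0:ℝ)..1, (deriv T z)^2 :=
  no_slip_sign_indefinite_term_estimate_general δ ε A β k R c₀ hδ hε hA hβ τ' hτ1 hτ2 hτ3 w T hw hT
    hw0 hw1 hw'0 hw'1 hT0 hT1 hsup
end

section
/- Let A > 0 and let δ, ε ∈ (0, 1/3]. Then 2A²/(27ε) ≤ A²(1−ε−δ) + (A²/(3ε)) (1−ε−δ)² (3 − 3ε + ε²)/(1−ε) ≤ 3A²/ε. -/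
/-- Two-sided bounds on `∫₀¹ (τ' - λ)²` for the stress-free construction:
`2A²/(27ε) ≤ A²(1-ε-δ) + (A²/(3ε))(1-ε-δ)²(3-3ε+ε²)/(1-ε) ≤ 3A²/ε` for `A > 0`,
`δ, ε ∈ (0,1/3]`. -/
theorem stress_free_background_L2_bounds
    (A δ ε : ℝ) (hA : 0 < A)
    (hδ : δ ∈ Set.Ioc (0:ℝ) (1/3)) (hε : ε ∈ Set.Ioc (0:ℝ) (1/3)) :
    2 * A^2 / (27 * ε) ≤
      A^2 * (1-ε-δ) + A^2 / (3*ε) * ((1-ε-δ)^2 * ((3 - 3*ε + ε^2) / (1-ε))) ∧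
    A^2 * (1-ε-δ) + A^2 / (3*ε) * ((1-ε-δ)^2 * ((3 - 3*ε + ε^2) / (1-ε))) ≤
      3 * A^2 / ε := by
  obtain ⟨hδ0, hδ1⟩ := hδ
  obtain ⟨hε0, hε1⟩ := hε
  have h1 : (0:ℝ) < 1 - ε := by linarith
  have hA2 : (0:ℝ) < A^2 := by positivity
  have hd : (1:ℝ)/3 ≤ 1 - ε - δ := by linarith
  have hC : (0:ℝ) < A^2 / (3*ε) := by positivity
  have hfrac : (2:ℝ) ≤ (3 - 3*ε + ε^2)/(1-ε) := by
    rw [le_div_iff₀ h1]; nlinarith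
  have hsq : (1:ℝ)/9 ≤ (1-ε-δ)^2 := by nlinarith
  constructor
  · have hX : (2:ℝ)/9 ≤ (1-ε-δ)^2 * ((3 - 3*ε + ε^2)/(1-ε)) := by nlinarith
    have h2 : A^2/(3*ε) * (2/9) ≤ A^2/(3*ε) * ((1-ε-δ)^2 * ((3 - 3*ε + ε^2)/(1-ε))) :=
      mul_le_mul_of_nonneg_left hX hC.le
    have h3 : 2 * A^2 / (27 * ε) = A^2/(3*ε) * (2/9) := by
      field_simp; ring
    have h4 : 0 ≤ A^2 * (1-ε-δ) := by nlinarith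
    linarith [h2, h4, h3.le]
  · have hX : (1-ε-δ)^2 * ((3 - 3*ε + ε^2)/(1-ε)) ≤ 3 := by
      rw [mul_div_assoc', div_le_iff₀ h1]
      have hsq2 : (1-ε-δ)^2 ≤ (1-ε)^2 := by nlinarith
      have h33 : (0:ℝ) ≤ 3 - 3*ε + ε^2 := by nlinarith
      nlinarith [mul_le_mul_of_nonneg_right hsq2 h33, mul_nonneg hε0.le hε0.le,
        mul_nonneg (mul_nonneg hε0.le hε0.le) hε0.le, hε0, hε1]
    have h2 : A^2/(3*ε) * ((1-ε-δ)^2 * ((3 - 3*ε + ε^2)/(1-ε))) ≤ A^2/(3*ε) * 3 :=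
      mul_le_mul_of_nonneg_left hX hC.le
    have h3 : A^2 * (1-ε-δ) ≤ A^2/(3*ε) := by
      rw [le_div_iff₀ (by positivity)]
      have h5 : 3*ε*(1-ε-δ) ≤ 1 := by nlinarith
      nlinarith [mul_le_mul_of_nonneg_left h5 hA2.le]
    have h4 : A^2/(3*ε) + A^2/(3*ε) * 3 ≤ 3 * A^2 / ε := by
      have heq : A^2/(3*ε) + A^2/(3*ε) * 3 = 4/3*(A^2/ε) := by field_simp; ring
      have hpos : 0 < A^2/ε := div_pos hA2 hε0
      have heq2 : 3 * A^2 / ε = 3*(A^2/ε) := by ring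
      rw [heq, heq2]; linarith
    linarith
end

section
/- Let δ, ε ∈ (0, 1/3] and set A := δ ε^{1/2}/3. Then 1/2 + (1/(2√3)) · (3A²/ε)^{1/2} − (1/2) δ + (1/2) A (1−ε−δ)(1−ε+δ) + (A/ε)(1−ε)(1−ε−δ) ln(1−ε) ≤ 1/2 − δ/6 + (2/27) δ ε^{−1/2} ln(1−ε). -/
set_option maxHeartbeats 1000000 in

/-- Stress-free bound on the quantity `U` of the auxiliary function method: for
`δ, ε ∈ (0,1/3]` and `A = δ ε^{1/2}/3`,
`1/2 + (1/(2√3))(3A²/ε)^{1/2} - (1/2)δ + (1/2)A(1-ε-δ)(1-ε+δ) + (A/ε)(1-ε)(1-ε-δ)ln(1-ε)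
  ≤ 1/2 - δ/6 + (2/27) δ ε^{-1/2} ln(1-ε)`. -/
theorem stress_free_U_bound
    (δ ε A : ℝ) (hδ : δ ∈ Set.Ioc (0:ℝ) (1/3)) (hε : ε ∈ Set.Ioc (0:ℝ) (1/3))
    (hA : A = δ * ε ^ ((1:ℝ)/2) / 3) :
    1/2 + (1 / (2 * Real.sqrt 3)) * (3 * A^2 / ε) ^ ((1:ℝ)/2)
        - (1/2) * δ + (1/2) * A * (1-ε-δ) * (1-ε+δ)
        + (A/ε) * (1-ε) * (1-ε-δ) * Real.log (1-ε) ≤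
      1/2 - δ/6 + (2/27) * δ * ε ^ (-(1:ℝ)/2) * Real.log (1-ε) := by
  obtain ⟨hδ0, hδ1⟩ := hδ
  obtain ⟨hε0, hε1⟩ := hε
  set s := Real.sqrt ε with hs
  have hs0 : 0 < s := Real.sqrt_pos.mpr hε0
  have hs2 : s ^ 2 = ε := Real.sq_sqrt hε0.le
  have hs1 : s ≤ 1 := by
    rw [show (1:ℝ) = Real.sqrt 1 by simp]
    exact Real.sqrt_le_sqrt (by linarith)
  have hεs : ε ^ ((1:ℝ)/2) = s := (Real.sqrt_eq_rpow ε).symm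
  have hA' : A = δ * s / 3 := by rw [hA, hεs]
  have hεneg : ε ^ (-(1:ℝ)/2) = 1 / s := by
    rw [neg_div, Real.rpow_neg hε0.le, ← Real.sqrt_eq_rpow, one_div]
  clear_value s
  -- the sqrt term equals δ/6
  have h3 : 3 * A ^ 2 / ε = δ ^ 2 / 3 := by
    rw [hA', ← hs2]; field_simp
  have hsqrt3 : (0:ℝ) < Real.sqrt 3 := Real.sqrt_pos.mpr (by norm_num)
  have hsq3 : Real.sqrt 3 * Real.sqrt 3 = 3 := Real.mul_self_sqrt (by norm_num)
  have hterm1 : (1 / (2 * Real.sqrt 3)) * (3 * A ^ 2 / ε) ^ ((1:ℝ)/2) = δ / 6 := by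
    rw [h3, ← Real.sqrt_eq_rpow, Real.sqrt_div (sq_nonneg δ), Real.sqrt_sq hδ0.le,
      div_mul_div_comm, one_mul, show 2 * Real.sqrt 3 * Real.sqrt 3 = 6 by nlinarith]
  -- log is nonpositive
  have hL : Real.log (1 - ε) ≤ 0 := Real.log_nonpos (by linarith) (by linarith)
  set L := Real.log (1 - ε) with hLdef
  clear_value L
  -- polynomial part
  have hP1 : (1/2) * A * (1-ε-δ) * (1-ε+δ) ≤ δ / 6 := by
    rw [hA']
    have hq0 : 0 ≤ (1-ε-δ) * (1-ε+δ) := by nlinarith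
    have hq1 : (1-ε-δ) * (1-ε+δ) ≤ 1 := by nlinarith
    have hds : δ * s ≤ δ := by nlinarith
    nlinarith [mul_le_mul hds hq1 hq0 hδ0.le]
  -- log part
  have hcoef : (A/ε) * (1-ε) * (1-ε-δ) = δ / (3*s) * ((1-ε) * (1-ε-δ)) := by
    rw [hA', ← hs2]; field_simp
  have hkey : (2:ℝ)/9 ≤ (1-ε) * (1-ε-δ) := by nlinarith
  have hP2 : (A/ε) * (1-ε) * (1-ε-δ) * L ≤ (2/27) * δ * (1/s) * L := by
    rw [hcoef]
    have hmul : ((1-ε) * (1-ε-δ)) * L ≤ (2:ℝ)/9 * L :=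
      mul_le_mul_of_nonpos_right hkey hL
    have hd : 0 ≤ δ / (3*s) := div_nonneg hδ0.le (by linarith)
    calc δ / (3*s) * ((1-ε) * (1-ε-δ)) * L
        = δ / (3*s) * (((1-ε) * (1-ε-δ)) * L) := by ring
      _ ≤ δ / (3*s) * ((2:ℝ)/9 * L) := mul_le_mul_of_nonneg_left hmul hd
      _ = (2/27) * δ * (1/s) * L := by field_simp; ring
  rw [hεneg, hterm1]
  linarith
end

section
/- Let R > 0 and let δ > 0 satisfy δ ≤ (2⁴⁹ · 5³ / 3³⁰)^{2/29} R^{−40/29}. Then for every k > 0, k⁴/R² + (360^{1/4}/4) δ^{1/8}/R − 2 c₁² k δ ≥ 0, where c₁ := 3^{3/4}/2^{3/2} (so c₁² = 3^{3/2}/8). -/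
/-! The quartic `k ↦ a k⁴ - b k + M` with `a, b, M ≥ 0` is nonnegative for `k ≥ 0` as soon as
`27 b⁴ ≤ 256 a M³`, by AM–GM applied to `a k⁴` and three copies of `M / 3`. For
`a = 1/R²`, `b = 2c₁²δ` and `M = (360^{1/4}/4) δ^{1/8}/R`, the eighth power of this condition
reads `δ²⁹ R⁴⁰ ≤ (2⁴⁹·5³/3³⁰)²`, which is the 29th power of the hypothesis on `δ`. -/

/-- AM–GM for the four numbers `x, M/3, M/3, M/3`. -/
theorem mul_pow_three_le_pow_four {x M : ℝ} (hx : 0 ≤ x) (hM : 0 ≤ M) :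
    256 * x * M ^ 3 ≤ 27 * (x + M) ^ 4 := by
  nlinarith [mul_nonneg (sq_nonneg (3 * x - M))
    (by positivity : 0 ≤ 3 * x ^ 2 + 14 * x * M + 27 * M ^ 2)]

theorem mul_le_mul_pow_four_add {a b k M : ℝ} (ha : 0 ≤ a) (hb : 0 ≤ b) (hk : 0 ≤ k)
    (hM : 0 ≤ M) (h : 27 * b ^ 4 ≤ 256 * a * M ^ 3) : b * k ≤ a * k ^ 4 + M := by
  have hak : 0 ≤ a * k ^ 4 := by positivity
  refine (pow_le_pow_iff_left₀ (by positivity) (by positivity) four_ne_zero).1 ?_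
  nlinarith [mul_pow_three_le_pow_four hak hM, mul_le_mul_of_nonneg_right h (pow_nonneg hk 4)]

theorem pow_mul_pow_le_of_le_rpow_mul_rpow {x K R : ℝ} {m n l : ℕ} (hx : 0 ≤ x) (hK : 0 ≤ K)
    (hR : 0 < R) (hn : n ≠ 0) (h : x ≤ K ^ ((m : ℝ) / n) * R ^ (-(l : ℝ) / n)) :
    x ^ n * R ^ l ≤ K ^ m := by
  have hn' : (n : ℝ) ≠ 0 := Nat.cast_ne_zero.2 hn
  have hpow : (K ^ ((m : ℝ) / n) * R ^ (-(l : ℝ) / n)) ^ n = K ^ m * (R ^ l)⁻¹ := by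
    rw [mul_pow, ← Real.rpow_mul_natCast hK, ← Real.rpow_mul_natCast hR.le,
      div_mul_cancel₀ _ hn', div_mul_cancel₀ _ hn', Real.rpow_neg hR.le, Real.rpow_natCast,
      Real.rpow_natCast]
  calc x ^ n * R ^ l ≤ K ^ m * (R ^ l)⁻¹ * R ^ l := by
        rw [← hpow]; gcongr
    _ = K ^ m := by field_simp

theorem stress_free_quartic_condition {R δ s q C : ℝ} (hR : 0 < R) (hs : 0 < s)
    (hs8 : s ^ 8 = δ) (hq : 0 ≤ q) (hq4 : q ^ 4 = 360) (hC : C ^ 4 = 3 ^ 6 / 2 ^ 12)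
    (h : δ ^ 29 * R ^ 40 ≤ ((2:ℝ) ^ 49 * 5 ^ 3 / 3 ^ 30) ^ 2) :
    27 * (2 * C * δ) ^ 4 ≤ 256 * (R ^ 2)⁻¹ * (q / 4 * s / R) ^ 3 := by
  subst hs8
  have hkey : 3 ^ 9 * s ^ 29 * R ^ 5 ≤ 2 ^ 10 * q ^ 3 := by
    refine (pow_le_pow_iff_left₀ (by positivity) (by positivity) (n := 8) (by norm_num)).1 ?_
    calc (3 ^ 9 * s ^ 29 * R ^ 5) ^ 8 = 3 ^ 72 * ((s ^ 8) ^ 29 * R ^ 40) := by ring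
      _ ≤ 3 ^ 72 * ((2:ℝ) ^ 49 * 5 ^ 3 / 3 ^ 30) ^ 2 := by gcongr
      _ = 2 ^ 80 * (q ^ 4) ^ 6 := by rw [hq4]; norm_num
      _ = (2 ^ 10 * q ^ 3) ^ 8 := by ring
  calc 27 * (2 * C * s ^ 8) ^ 4 = 3 ^ 9 * s ^ 29 * R ^ 5 * (s ^ 3 / (2 ^ 8 * R ^ 5)) := by
        rw [mul_pow, mul_pow, hC]; field_simp; ring
    _ ≤ 2 ^ 10 * q ^ 3 * (s ^ 3 / (2 ^ 8 * R ^ 5)) := by gcongr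
    _ = 256 * (R ^ 2)⁻¹ * (q / 4 * s / R) ^ 3 := by field_simp; ring

/-- Reduced form of the stress-free spectral constraint: if
`δ ≤ (2⁴⁹·5³/3³⁰)^{2/29} R^{-40/29}`, then for every `k > 0`,
`k⁴/R² + (360^{1/4}/4) δ^{1/8}/R - 2c₁² k δ ≥ 0` with `c₁ = 3^{3/4}/2^{3/2}`. -/
theorem stress_free_reduced_spectral_inequality
    (R δ : ℝ) (hR : 0 < R) (hδ : 0 < δ)
    (hδle : δ ≤ ((2:ℝ)^49 * 5^3 / 3^30) ^ ((2:ℝ)/29) * R ^ (-(40:ℝ)/29)) :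
    ∀ k : ℝ, 0 < k →
      k^4 / R^2 + (360:ℝ) ^ ((1:ℝ)/4) / 4 * δ ^ ((1:ℝ)/8) / R
        - 2 * (3 ^ ((3:ℝ)/4) / 2 ^ ((3:ℝ)/2))^2 * k * δ ≥ 0 := by
  intro k hk
  have hC : (((3:ℝ) ^ ((3:ℝ)/4) / 2 ^ ((3:ℝ)/2)) ^ 2) ^ 4 = 3 ^ 6 / 2 ^ 12 := by
    rw [← pow_mul, div_pow, ← Real.rpow_mul_natCast (by norm_num),
      ← Real.rpow_mul_natCast (by norm_num)]
    norm_num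
  have hq4 : ((360:ℝ) ^ ((1:ℝ)/4)) ^ 4 = 360 := by
    rw [← Real.rpow_mul_natCast (by norm_num)]; norm_num
  have hs8 : (δ ^ ((1:ℝ)/8)) ^ 8 = δ := by
    rw [← Real.rpow_mul_natCast hδ.le]; norm_num
  have hδR : δ ^ 29 * R ^ 40 ≤ ((2:ℝ) ^ 49 * 5 ^ 3 / 3 ^ 30) ^ 2 :=
    pow_mul_pow_le_of_le_rpow_mul_rpow hδ.le (by positivity) hR (by norm_num)
      (by exact_mod_cast hδle)
  have hyoung := mul_le_mul_pow_four_add (by positivity) (by positivity) hk.le (by positivity)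
    (stress_free_quartic_condition hR (by positivity) hs8 (by positivity) hq4 hC hδR)
  rw [ge_iff_le, sub_nonneg, div_eq_inv_mul (k ^ 4)]
  linarith
end
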